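/- arXiv:1805.01958 — 4 statements merged into one kernel-verified Lean document; each statement's English description precedes it below -/
import Mathlib

section
/- For every κ with 0 < κ < π there exists M_κ > 0 such that the following holds. Let n ≥ 2, let u₁, u₂ ∈ ℝ^n be unit vectors with arccos⟨u₁, u₂⟩ = κ, and let W = {x ∈ ℝ^n : ⟨x, u₁⟩ ≤ 0 and ⟨x, u₂⟩ ≤ 0} be the wedge of opening angle π − κ whose tip contains the origin. Let s > 0 and let P ⊆ W be a convex polytope with nonempty interior whose Euclidean distance to the origin is at most s. Then P has two facets F₁, F₂ with outer unit normals n₁, n₂ such that arccos⟨n₁, n₂⟩ ∈ [κ/16, π), and such that, setting L = span{n₁, n₂}, hᵢ = sup_{x ∈ P} ⟨x, nᵢ⟩ (i = 1, 2), and letting w′ be a point of L with ⟨w′, n₁⟩ = h₁ and ⟨w′, n₂⟩ = h₂, the distance from w′ to the orthogonal projection of F₁ onto L is at most M_κ · s. -/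
open scoped RealInnerProductSpace

noncomputable section

/-- `F` is a facet of the polytope `P ⊆ ℝ^n` with outer unit normal `v`: `v` is a unit vector,
`F = P ∩ {x : ⟪x, v⟫ = h}` where `h = sup_{x ∈ P} ⟪x, v⟫`, and `F` has affine dimension
`n - 1`. -/
def IsFacet {n : ℕ} (P F : Set (EuclideanSpace ℝ (Fin n)))
    (v : EuclideanSpace ℝ (Fin n)) : Prop :=
  ‖v‖ = 1 ∧
  F = {x ∈ P | ⟪x, v⟫ = sSup ((fun y => ⟪y, v⟫) '' P)} ∧
  Module.finrank ℝ (vectorSpan ℝ F) = n - 1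

section Auxiliary

open Real Set Metric

variable {n : ℕ}

/-- The full maximal face of `P` in direction `m`, at which `y` is a maximizer. -/
def FacetAt {n : ℕ} (P : Set (EuclideanSpace ℝ (Fin n))) (y m : EuclideanSpace ℝ (Fin n)) :
    Prop :=
  IsFacet P {x ∈ P | ⟪x, m⟫ = sSup ((fun x => ⟪x, m⟫) '' P)} m ∧
  (∀ x ∈ P, ⟪x, m⟫ ≤ ⟪y, m⟫) ∧ ⟪y, m⟫ = sSup ((fun x => ⟪x, m⟫) '' P)

lemma my_arccos_le {x y : ℝ} (h : x ≤ y) : Real.arccos y ≤ Real.arccos x := by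
  simp only [Real.arccos_eq_pi_div_two_sub_arcsin]
  have := Real.monotone_arcsin h; linarith

lemma abs_inner_unit {a b : EuclideanSpace ℝ (Fin n)} (ha : ‖a‖ = 1) (hb : ‖b‖ = 1) :
    |⟪a, b⟫| ≤ 1 := by
  have := abs_real_inner_le_norm a b
  rw [ha, hb] at this; simpa using this

lemma cos_sum_le_inner {a b c : EuclideanSpace ℝ (Fin n)} (ha : ‖a‖ = 1) (hb : ‖b‖ = 1)
    (hc : ‖c‖ = 1) : Real.cos (Real.arccos ⟪a, b⟫ + Real.arccos ⟪b, c⟫) ≤ ⟪a, c⟫ := by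
  have hp := abs_le.mp (abs_inner_unit ha hb)
  have hq := abs_le.mp (abs_inner_unit hb hc)
  have hbb : ⟪b, b⟫ = (1:ℝ) := by
    rw [real_inner_self_eq_norm_sq, hb]; norm_num
  have haa : ⟪a, a⟫ = (1:ℝ) := by
    rw [real_inner_self_eq_norm_sq, ha]; norm_num
  have hcc : ⟪c, c⟫ = (1:ℝ) := by
    rw [real_inner_self_eq_norm_sq, hc]; norm_num
  have expand : ⟪a - ⟪a,b⟫ • b, c - ⟪b,c⟫ • b⟫ = ⟪a, c⟫ - ⟪a,b⟫ * ⟪b,c⟫ := by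
    simp only [inner_sub_left, inner_sub_right, real_inner_smul_left, real_inner_smul_right, hbb]
    rw [real_inner_comm b a, real_inner_comm c b]
    ring
  have hna : ‖a - ⟪a,b⟫ • b‖ ^ 2 = 1 - ⟪a,b⟫ ^ 2 := by
    rw [← real_inner_self_eq_norm_sq]
    simp only [inner_sub_left, inner_sub_right, real_inner_smul_left, real_inner_smul_right,
      hbb, haa]
    rw [real_inner_comm b a]
    ring
  have hnc : ‖c - ⟪b,c⟫ • b‖ ^ 2 = 1 - ⟪b,c⟫ ^ 2 := by
    rw [← real_inner_self_eq_norm_sq]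
    simp only [inner_sub_left, inner_sub_right, real_inner_smul_left, real_inner_smul_right,
      hbb, hcc]
    rw [real_inner_comm c b]
    ring
  have hlow : -(‖a - ⟪a,b⟫ • b‖ * ‖c - ⟪b,c⟫ • b‖) ≤ ⟪a - ⟪a,b⟫ • b, c - ⟪b,c⟫ • b⟫ := by
    have h := abs_le.mp (abs_real_inner_le_norm (a - ⟪a,b⟫ • b) (c - ⟪b,c⟫ • b))
    linarith [h.1]
  have hsqa : ‖a - ⟪a,b⟫ • b‖ = Real.sqrt (1 - ⟪a,b⟫ ^ 2) := by
    rw [← hna, Real.sqrt_sq (norm_nonneg _)]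
  have hsqc : ‖c - ⟪b,c⟫ • b‖ = Real.sqrt (1 - ⟪b,c⟫ ^ 2) := by
    rw [← hnc, Real.sqrt_sq (norm_nonneg _)]
  rw [Real.cos_add, Real.cos_arccos hp.1 hp.2, Real.cos_arccos hq.1 hq.2,
    Real.sin_arccos, Real.sin_arccos]
  rw [hsqa, hsqc] at hlow
  rw [expand] at hlow
  linarith

lemma arccos_inner_triangle {a b c : EuclideanSpace ℝ (Fin n)} (ha : ‖a‖ = 1) (hb : ‖b‖ = 1)
    (hc : ‖c‖ = 1) :
    Real.arccos ⟪a, c⟫ ≤ Real.arccos ⟪a, b⟫ + Real.arccos ⟪b, c⟫ := by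
  by_cases hπ : Real.arccos ⟪a, b⟫ + Real.arccos ⟪b, c⟫ ≤ π
  · have h := cos_sum_le_inner ha hb hc
    have h2 : Real.arccos ⟪a, c⟫ ≤ Real.arccos (Real.cos (Real.arccos ⟪a, b⟫ + Real.arccos ⟪b, c⟫)) :=
      my_arccos_le h
    rwa [Real.arccos_cos (add_nonneg (Real.arccos_nonneg _) (Real.arccos_nonneg _)) hπ] at h2
  · push_neg at hπ
    linarith [Real.arccos_le_pi ⟪a, c⟫]

lemma extreme_perturb {S : Finset (EuclideanSpace ℝ (Fin n))}
    {y z b : EuclideanSpace ℝ (Fin n)}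
    (hb : b ∈ Set.extremePoints ℝ {ω : EuclideanSpace ℝ (Fin n) |
        (∀ σ ∈ S, ⟪σ - y, ω⟫ ≤ 0) ∧ ⟪ω, y - z⟫ = 1})
    (ω' : EuclideanSpace ℝ (Fin n)) (hbω : ⟪b, ω'⟫ = 0)
    (htight : ∀ σ ∈ S, ⟪σ - y, b⟫ = 0 → ⟪σ - y, ω'⟫ = 0) : ω' = 0 := by
  obtain ⟨⟨hbS, hbz⟩, hbext⟩ := hb
  by_contra hω0
  have hb0 : b ≠ 0 := by
    intro h; rw [h] at hbz; simp at hbz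
  set d : ℝ := ⟪ω', y - z⟫ with hd
  -- eventually, perturbations stay in the set
  have hev : ∀ᶠ t : ℝ in nhds 0,
      (∀ σ ∈ S, ⟪σ - y, b⟫ + t * ⟪σ - y, ω'⟫ ≤ 0 ∧ ⟪σ - y, b⟫ + (-t) * ⟪σ - y, ω'⟫ ≤ 0)
        ∧ |t * d| < 1 := by
    apply Filter.Eventually.and
    · rw [Finset.eventually_all]
      intro σ hσ
      rcases eq_or_lt_of_le (hbS σ hσ) with heq | hlt
      · have h0 := htight σ hσ heq
        filter_upwards with t
        rw [heq, h0]
        norm_num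
      · have h1 : Filter.Tendsto (fun t : ℝ => ⟪σ - y, b⟫ + t * ⟪σ - y, ω'⟫) (nhds 0)
            (nhds ⟪σ - y, b⟫) := by
          have hcont : Continuous fun t : ℝ => ⟪σ - y, b⟫ + t * ⟪σ - y, ω'⟫ :=
            continuous_const.add (continuous_id.mul continuous_const)
          have := hcont.tendsto 0; simpa using this
        have h2 : Filter.Tendsto (fun t : ℝ => ⟪σ - y, b⟫ + (-t) * ⟪σ - y, ω'⟫) (nhds 0)
            (nhds ⟪σ - y, b⟫) := by
          have hcont : Continuous fun t : ℝ => ⟪σ - y, b⟫ + (-t) * ⟪σ - y, ω'⟫ :=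
            continuous_const.add (continuous_neg.mul continuous_const)
          have := hcont.tendsto 0; simpa using this
        filter_upwards [h1.eventually_lt_const hlt, h2.eventually_lt_const hlt] with t ha hb
        exact ⟨ha.le, hb.le⟩
    · have h1 : Filter.Tendsto (fun t : ℝ => |t * d|) (nhds 0) (nhds 0) := by
        have hcont : Continuous fun t : ℝ => |t * d| :=
          (continuous_id.mul continuous_const).abs
        have := hcont.tendsto 0; simpa using this
      exact h1.eventually_lt_const one_pos
  obtain ⟨t, ht, htpos⟩ : ∃ t : ℝ, ((∀ σ ∈ S, ⟪σ - y, b⟫ + t * ⟪σ - y, ω'⟫ ≤ 0 ∧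
      ⟪σ - y, b⟫ + (-t) * ⟪σ - y, ω'⟫ ≤ 0) ∧ |t * d| < 1) ∧ 0 < t := by
    have := (eventually_nhdsWithin_of_eventually_nhds (s := Set.Ioi (0:ℝ)) hev).and
      (eventually_mem_nhdsWithin)
    obtain ⟨t, h1, h2⟩ := this.exists
    exact ⟨t, h1, h2⟩
  have habs := abs_lt.mp ht.2
  have hp1 : (0:ℝ) < 1 + t * d := by linarith
  have hp2 : (0:ℝ) < 1 - t * d := by linarith
  set ωp := (1 + t * d)⁻¹ • (b + t • ω') with hωp
  set ωm := (1 - t * d)⁻¹ • (b - t • ω') with hωm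
  have hmemp : ωp ∈ {ω : EuclideanSpace ℝ (Fin n) |
      (∀ σ ∈ S, ⟪σ - y, ω⟫ ≤ 0) ∧ ⟪ω, y - z⟫ = 1} := by
    constructor
    · intro σ hσ
      rw [hωp, real_inner_smul_right]
      apply mul_nonpos_of_nonneg_of_nonpos (le_of_lt (inv_pos.mpr hp1))
      rw [inner_add_right, real_inner_smul_right]
      exact (ht.1 σ hσ).1
    · rw [hωp, real_inner_smul_left, inner_add_left, real_inner_smul_left, hbz, ← hd]
      field_simp
  have hmemm : ωm ∈ {ω : EuclideanSpace ℝ (Fin n) |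
      (∀ σ ∈ S, ⟪σ - y, ω⟫ ≤ 0) ∧ ⟪ω, y - z⟫ = 1} := by
    constructor
    · intro σ hσ
      rw [hωm, real_inner_smul_right]
      apply mul_nonpos_of_nonneg_of_nonpos (le_of_lt (inv_pos.mpr hp2))
      rw [inner_sub_right, real_inner_smul_right]
      have := (ht.1 σ hσ).2; linarith
    · rw [hωm, real_inner_smul_left, inner_sub_left, real_inner_smul_left, hbz, ← hd]
      field_simp
  have hseg : b ∈ openSegment ℝ ωm ωp := by
    refine ⟨(1 - t * d)/2, (1 + t * d)/2, by linarith, by linarith, by ring, ?_⟩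
    rw [hωp, hωm, smul_smul, smul_smul]
    have e1 : (1 - t * d)/2 * (1 - t * d)⁻¹ = 1/2 := by field_simp
    have e2 : (1 + t * d)/2 * (1 + t * d)⁻¹ = 1/2 := by field_simp
    rw [e1, e2]
    module
  have := hbext hmemm hmemp hseg
  -- ωp = b gives contradiction
  have hωpb : ωp = b := hbext hmemp hmemm (by rw [openSegment_symm]; exact hseg)
  rw [hωp] at hωpb
  have : b + t • ω' = (1 + t * d) • b := by
    have h := congrArg (fun x => (1 + t * d) • x) hωpb
    simp only [smul_smul, mul_inv_cancel₀ (ne_of_gt hp1), one_smul] at h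
    exact h
  have hω'eq : t • ω' = (t * d) • b := by
    have := this
    rw [add_smul, one_smul] at this
    exact (add_right_injective b this : _)
  have : ω' = d • b := by
    have h := congrArg (fun x => t⁻¹ • x) hω'eq
    simp only [smul_smul, inv_mul_cancel₀ (ne_of_gt htpos), one_smul] at h
    rw [h]
    congr 1
    field_simp
  rw [this] at hbω
  rw [real_inner_smul_right, real_inner_self_eq_norm_sq] at hbω
  have hbn : ‖b‖ ≠ 0 := norm_ne_zero_iff.mpr hb0
  have hd0 : d = 0 := by
    rcases mul_eq_zero.mp hbω with h | h
    · exact h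
    · exact absurd (pow_eq_zero_iff (by norm_num) |>.mp h) hbn
  rw [this, hd0, zero_smul] at hω0
  exact hω0 rfl

lemma inner_le_of_forall_S {S : Finset (EuclideanSpace ℝ (Fin n))}
    {P : Set (EuclideanSpace ℝ (Fin n))}
    (hP : P = convexHull ℝ (S : Set (EuclideanSpace ℝ (Fin n))))
    {w : EuclideanSpace ℝ (Fin n)} {r : ℝ} (h : ∀ σ ∈ S, ⟪σ, w⟫ ≤ r) :
    ∀ x ∈ P, ⟪x, w⟫ ≤ r := by
  intro x hx
  rw [hP] at hx
  have hlin : IsLinearMap ℝ (fun x : EuclideanSpace ℝ (Fin n) => ⟪x, w⟫) :=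
    ⟨fun a b => inner_add_left a b w, fun t a => real_inner_smul_left a w t⟩
  exact convexHull_min (fun σ hσ => h σ hσ) (convex_halfSpace_le hlin r) hx

lemma sSup_eq_of_max {P : Set (EuclideanSpace ℝ (Fin n))} {w y : EuclideanSpace ℝ (Fin n)}
    (hy : y ∈ P) (h : ∀ x ∈ P, ⟪x, w⟫ ≤ ⟪y, w⟫) :
    sSup ((fun x => ⟪x, w⟫) '' P) = ⟪y, w⟫ :=
  IsGreatest.csSup_eq ⟨⟨y, hy, rfl⟩, by rintro r ⟨x, hx, rfl⟩; exact h x hx⟩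

lemma facet_of_extreme (hn : 2 ≤ n) {S : Finset (EuclideanSpace ℝ (Fin n))}
    {P : Set (EuclideanSpace ℝ (Fin n))}
    (hP : P = convexHull ℝ (S : Set (EuclideanSpace ℝ (Fin n))))
    {y b : EuclideanSpace ℝ (Fin n)} (hy : y ∈ P)
    (hbS : ∀ σ ∈ S, ⟪σ - y, b⟫ ≤ 0) (hb0 : b ≠ 0)
    (hperturb : ∀ ω' : EuclideanSpace ℝ (Fin n), ⟪b, ω'⟫ = 0 →
        (∀ σ ∈ S, ⟪σ - y, b⟫ = 0 → ⟪σ - y, ω'⟫ = 0) → ω' = 0) :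
    IsFacet P {x ∈ P | ⟪x, ‖b‖⁻¹ • b⟫ = sSup ((fun x => ⟪x, ‖b‖⁻¹ • b⟫) '' P)} (‖b‖⁻¹ • b) ∧
    (∀ x ∈ P, ⟪x, ‖b‖⁻¹ • b⟫ ≤ ⟪y, ‖b‖⁻¹ • b⟫) ∧
    ⟪y, ‖b‖⁻¹ • b⟫ = sSup ((fun x => ⟪x, ‖b‖⁻¹ • b⟫) '' P) := by
  have hnb : (0:ℝ) < ‖b‖ := norm_pos_iff.mpr hb0
  set m : EuclideanSpace ℝ (Fin n) := ‖b‖⁻¹ • b with hm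
  have hmnorm : ‖m‖ = 1 := by
    rw [hm, norm_smul, norm_inv, norm_norm, inv_mul_cancel₀ (ne_of_gt hnb)]
  -- maximality at y
  have hmax : ∀ x ∈ P, ⟪x, m⟫ ≤ ⟪y, m⟫ := by
    intro x hx
    have h1 : ∀ σ ∈ S, ⟪σ, b⟫ ≤ ⟪y, b⟫ := by
      intro σ hσ
      have := hbS σ hσ
      rw [inner_sub_left] at this
      linarith
    have h2 := inner_le_of_forall_S hP h1 x hx
    rw [hm, real_inner_smul_right, real_inner_smul_right]
    exact mul_le_mul_of_nonneg_left h2 (le_of_lt (inv_pos.mpr hnb))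
  have hsSup := sSup_eq_of_max hy hmax
  -- the facet set
  set F : Set (EuclideanSpace ℝ (Fin n)) :=
    {x ∈ P | ⟪x, m⟫ = sSup ((fun x => ⟪x, m⟫) '' P)} with hF
  have hyF : y ∈ F := ⟨hy, hsSup.symm⟩
  have hmemF : ∀ x, x ∈ F ↔ x ∈ P ∧ ⟪x, m⟫ = ⟪y, m⟫ := by
    intro x; rw [hF]; simp only [Set.mem_setOf_eq, hsSup]
  -- inner with b vs m
  have hinner_bm : ∀ x : EuclideanSpace ℝ (Fin n), ⟪x, b⟫ = ‖b‖ * ⟪x, m⟫ := by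
    intro x
    rw [hm, real_inner_smul_right, ← mul_assoc, mul_inv_cancel₀ (ne_of_gt hnb), one_mul]
  -- tight set span equals orthogonal complement of b
  set V : Submodule ℝ (EuclideanSpace ℝ (Fin n)) :=
    Submodule.span ℝ ((fun σ => σ - y) '' {σ | σ ∈ S ∧ ⟪σ - y, b⟫ = 0}) with hV
  have hVle : V ≤ (Submodule.span ℝ {b})ᗮ := by
    rw [hV, Submodule.span_le]
    rintro v ⟨σ, ⟨hσS, hσt⟩, rfl⟩
    rw [SetLike.mem_coe, Submodule.mem_orthogonal]
    intro u hu
    rw [Submodule.mem_span_singleton] at hu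
    obtain ⟨r, rfl⟩ := hu
    rw [real_inner_smul_left, real_inner_comm, hσt, mul_zero]
  have hVge : (Submodule.span ℝ {b})ᗮ ≤ V := by
    intro w hw
    have hw' : ⟪b, w⟫ = 0 := by
      rw [Submodule.mem_orthogonal] at hw
      exact hw b (Submodule.mem_span_singleton_self b)
    set ω' := w - (Submodule.orthogonalProjectionOnto V w : EuclideanSpace ℝ (Fin n)) with hω'
    have hproj_mem : (Submodule.orthogonalProjectionOnto V w : EuclideanSpace ℝ (Fin n)) ∈ V :=
      (Submodule.orthogonalProjectionOnto V w).2
    have h1 : ⟪b, ω'⟫ = 0 := by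
      rw [hω', inner_sub_right, hw']
      have : ⟪b, (Submodule.orthogonalProjectionOnto V w : EuclideanSpace ℝ (Fin n))⟫ = 0 := by
        have h := hVle hproj_mem
        rw [Submodule.mem_orthogonal] at h
        exact h b (Submodule.mem_span_singleton_self b)
        
      rw [this]; ring
    have h2 : ∀ σ ∈ S, ⟪σ - y, b⟫ = 0 → ⟪σ - y, ω'⟫ = 0 := by
      intro σ hσ ht
      have hσV : σ - y ∈ V := by
        rw [hV]
        exact Submodule.subset_span ⟨σ, ⟨hσ, ht⟩, rfl⟩
      have horth := Submodule.sub_starProjection_mem_orthogonal (K := V) w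
      rw [Submodule.mem_orthogonal] at horth
      exact horth (σ - y) hσV
    have := hperturb ω' h1 h2
    rw [hω', sub_eq_zero] at this
    rw [this]
    exact hproj_mem
  have hVeq : V = (Submodule.span ℝ {b})ᗮ := le_antisymm hVle hVge
  -- vectorSpan F = orthogonal complement of b
  have hvs : vectorSpan ℝ F = (Submodule.span ℝ {b})ᗮ := by
    apply le_antisymm
    · rw [vectorSpan_def, Submodule.span_le]
      rintro v hv
      obtain ⟨x, hx, x', hx', rfl⟩ := hv
      rw [SetLike.mem_coe, Submodule.mem_orthogonal]
      intro u hu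
      rw [Submodule.mem_span_singleton] at hu
      obtain ⟨r, rfl⟩ := hu
      have hx1 := ((hmemF x).mp hx).2
      have hx2 := ((hmemF x').mp hx').2
      have : ⟪x - x', b⟫ = 0 := by
        rw [inner_sub_left, hinner_bm, hinner_bm, hx1, hx2]; ring
      rw [real_inner_smul_left, real_inner_comm]
      have hvsub : ((fun x1 x2 => x1 -ᵥ x2) x x' : EuclideanSpace ℝ (Fin n)) = x - x' := rfl
      rw [hvsub, this, mul_zero]
    · rw [← hVeq, hV, Submodule.span_le]
      rintro v ⟨σ, ⟨hσS, hσt⟩, rfl⟩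
      have hσF : σ ∈ F := by
        rw [hmemF]
        constructor
        · rw [hP]; exact subset_convexHull ℝ _ hσS
        · have : ⟪σ, b⟫ = ⟪y, b⟫ := by
            have := hσt; rw [inner_sub_left] at this; linarith
          rw [hinner_bm, hinner_bm] at this
          exact mul_left_cancel₀ (ne_of_gt hnb) this
      have : σ - y ∈ F -ᵥ F := ⟨σ, hσF, y, hyF, rfl⟩
      rw [vectorSpan_def]
      exact Submodule.subset_span this
  -- finrank
  haveI : Fact (Module.finrank ℝ (EuclideanSpace ℝ (Fin n)) = (n - 1) + 1) :=
    ⟨by rw [finrank_euclideanSpace, Fintype.card_fin]; omega⟩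
  have hrank : Module.finrank ℝ (vectorSpan ℝ F) = n - 1 := by
    rw [hvs]
    exact Submodule.finrank_orthogonal_span_singleton hb0
  exact ⟨⟨hmnorm, rfl, hrank⟩, hmax, hsSup.symm⟩

lemma facet_dichotomy (hn : 2 ≤ n) {S : Finset (EuclideanSpace ℝ (Fin n))}
    {P : Set (EuclideanSpace ℝ (Fin n))}
    (hP : P = convexHull ℝ (S : Set (EuclideanSpace ℝ (Fin n))))
    {z : EuclideanSpace ℝ (Fin n)} {ε : ℝ} (hε : 0 < ε)
    (hball : ∀ w : EuclideanSpace ℝ (Fin n), dist w z ≤ ε → w ∈ P)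
    {y ν : EuclideanSpace ℝ (Fin n)} (hy : y ∈ P) (hν0 : ν ≠ 0)
    (hν : ∀ x ∈ P, ⟪x - y, ν⟫ ≤ 0)
    {c : ℝ} (hc0 : 0 ≤ c) (hc1 : c < 1) :
    (∃ n₁ n₂ : EuclideanSpace ℝ (Fin n), FacetAt P y n₁ ∧ FacetAt P y n₂ ∧
      -1 < ⟪n₁, n₂⟫ ∧ ⟪n₁, n₂⟫ < c) ∨
    (∃ n₁ : EuclideanSpace ℝ (Fin n), FacetAt P y n₁ ∧ c ≤ ⟪‖ν‖⁻¹ • ν, n₁⟫) := by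
  classical
  set B : Set (EuclideanSpace ℝ (Fin n)) :=
    {ω : EuclideanSpace ℝ (Fin n) | (∀ σ ∈ S, ⟪σ - y, ω⟫ ≤ 0) ∧ ⟪ω, y - z⟫ = 1} with hB
  -- key coercivity estimate
  have key : ∀ ω : EuclideanSpace ℝ (Fin n), (∀ σ ∈ S, ⟪σ - y, ω⟫ ≤ 0) →
      ε * ‖ω‖ ≤ ⟪ω, y - z⟫ := by
    intro ω hω
    by_cases h0 : ω = 0
    · simp [h0]
    have hωP : ∀ x ∈ P, ⟪x, ω⟫ ≤ ⟪y, ω⟫ := by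
      apply inner_le_of_forall_S hP
      intro σ hσ
      have := hω σ hσ; rw [inner_sub_left] at this; linarith
    have hnω : (0:ℝ) < ‖ω‖ := norm_pos_iff.mpr h0
    have hxP : z + (ε * ‖ω‖⁻¹) • ω ∈ P := by
      apply hball
      rw [dist_eq_norm, add_sub_cancel_left, norm_smul]
      rw [Real.norm_of_nonneg (by positivity)]
      rw [mul_assoc, inv_mul_cancel₀ (ne_of_gt hnω), mul_one]
    have := hωP _ hxP
    rw [inner_add_left, real_inner_smul_left, real_inner_self_eq_norm_sq] at this
    have h2 : ⟪z, ω⟫ + ε * ‖ω‖ ≤ ⟪y, ω⟫ := by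
      have e : ε * ‖ω‖⁻¹ * ‖ω‖ ^ 2 = ε * ‖ω‖ := by field_simp
      rw [e] at this; linarith
    have e2 : ⟪ω, y - z⟫ = ⟪y, ω⟫ - ⟪z, ω⟫ := by
      rw [real_inner_comm, inner_sub_left]
    linarith [h2, e2.ge]
  -- B is nonempty, compact, convex
  have hνS : ∀ σ ∈ S, ⟪σ - y, ν⟫ ≤ 0 := fun σ hσ =>
    hν σ (by rw [hP]; exact subset_convexHull ℝ _ hσ)
  have htν : ε * ‖ν‖ ≤ ⟪ν, y - z⟫ := key ν hνS
  have htpos : (0:ℝ) < ⟪ν, y - z⟫ := lt_of_lt_of_le (mul_pos hε (norm_pos_iff.mpr hν0)) htν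
  set t : ℝ := ⟪ν, y - z⟫ with htdef
  have hνB : t⁻¹ • ν ∈ B := by
    constructor
    · intro σ hσ
      rw [real_inner_smul_right]
      exact mul_nonpos_of_nonneg_of_nonpos (le_of_lt (inv_pos.mpr htpos)) (hνS σ hσ)
    · rw [real_inner_smul_left, ← htdef, inv_mul_cancel₀ (ne_of_gt htpos)]
  have hBne : B.Nonempty := ⟨_, hνB⟩
  have hBconv : Convex ℝ B := by
    intro ω₁ h1 ω₂ h2 a b ha hb hab
    constructor
    · intro σ hσ
      rw [inner_add_right, real_inner_smul_right, real_inner_smul_right]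
      have := h1.1 σ hσ; have := h2.1 σ hσ
      nlinarith [h1.1 σ hσ, h2.1 σ hσ]
    · rw [inner_add_left, real_inner_smul_left, real_inner_smul_left, h1.2, h2.2]
      linarith
  have hBclosed : IsClosed B := by
    have h1 : IsClosed {ω : EuclideanSpace ℝ (Fin n) | ⟪ω, y - z⟫ = 1} :=
      isClosed_eq (Continuous.inner continuous_id continuous_const) continuous_const
    have h2 : IsClosed {ω : EuclideanSpace ℝ (Fin n) | ∀ σ ∈ S, ⟪σ - y, ω⟫ ≤ 0} := by
      have : {ω : EuclideanSpace ℝ (Fin n) | ∀ σ ∈ S, ⟪σ - y, ω⟫ ≤ 0} =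
          ⋂ σ ∈ S, {ω : EuclideanSpace ℝ (Fin n) | ⟪σ - y, ω⟫ ≤ 0} := by
        ext ω; simp
      rw [this]
      exact isClosed_biInter fun σ _ =>
        isClosed_le (Continuous.inner continuous_const continuous_id) continuous_const
    have : B = {ω : EuclideanSpace ℝ (Fin n) | ∀ σ ∈ S, ⟪σ - y, ω⟫ ≤ 0} ∩
        {ω : EuclideanSpace ℝ (Fin n) | ⟪ω, y - z⟫ = 1} := by
      ext ω; simp [hB, Set.mem_setOf_eq, Set.mem_inter_iff]
    rw [this]; exact h2.inter h1
  have hBcompact : IsCompact B := by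
    apply Metric.isCompact_of_isClosed_isBounded hBclosed
    rw [Metric.isBounded_iff_subset_closedBall 0]
    refine ⟨ε⁻¹, fun ω hω => ?_⟩
    rw [Metric.mem_closedBall, dist_zero_right]
    have := key ω hω.1
    rw [hω.2] at this
    rw [← one_div, le_div_iff₀ hε]
    linarith
  have hKM := closure_convexHull_extremePoints hBcompact hBconv
  have hextne : (B.extremePoints ℝ).Nonempty := by
    by_contra h
    rw [Set.not_nonempty_iff_eq_empty] at h
    rw [h, convexHull_empty, closure_empty] at hKM
    exact (hBne.ne_empty) hKM.symm
  -- every extreme point gives a facet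
  have hfac : ∀ b ∈ B.extremePoints ℝ, b ≠ 0 ∧ FacetAt P y (‖b‖⁻¹ • b) := by
    intro b hb
    have hbB : b ∈ B := extremePoints_subset hb
    have hb0 : b ≠ 0 := by
      intro h; have := hbB.2; rw [h] at this; simp at this
    have hperturb := extreme_perturb hb
    have := facet_of_extreme hn hP hy hbB.1 hb0 hperturb
    exact ⟨hb0, this.1, this.2.1, this.2.2⟩
  by_cases hdis : ∃ b₁ ∈ B.extremePoints ℝ, ∃ b₂ ∈ B.extremePoints ℝ,
      ⟪‖b₁‖⁻¹ • b₁, ‖b₂‖⁻¹ • b₂⟫ < c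
  · left
    obtain ⟨b₁, hb₁, b₂, hb₂, hlt⟩ := hdis
    obtain ⟨hb₁0, hfac₁⟩ := hfac b₁ hb₁
    obtain ⟨hb₂0, hfac₂⟩ := hfac b₂ hb₂
    refine ⟨_, _, hfac₁, hfac₂, ?_, hlt⟩
    -- -1 < inner
    set m₁ := ‖b₁‖⁻¹ • b₁
    set m₂ := ‖b₂‖⁻¹ • b₂
    have hm₁ : ‖m₁‖ = 1 := hfac₁.1.1
    have hm₂ : ‖m₂‖ = 1 := hfac₂.1.1
    by_contra hle
    push_neg at hle
    have habs : |⟪m₁, m₂⟫| ≤ 1 := by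
      have := abs_real_inner_le_norm m₁ m₂
      rw [hm₁, hm₂] at this; simpa using this
    have heq : ⟪m₁, m₂⟫ = -1 := le_antisymm hle (abs_le.mp habs).1
    have hm2eq : m₂ = -m₁ := by
      have hz : ‖m₁ + m₂‖ ^ 2 = 0 := by
        rw [norm_add_sq_real, heq, hm₁, hm₂]; ring
      have hz2 := pow_eq_zero_iff (two_ne_zero) |>.mp hz
      rw [norm_eq_zero] at hz2
      exact eq_neg_of_add_eq_zero_right hz2
    -- contradiction with interior ball
    have hx1 : z + ε • m₁ ∈ P := by
      apply hball
      rw [dist_eq_norm, add_sub_cancel_left, norm_smul, hm₁,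
        Real.norm_of_nonneg (le_of_lt hε), mul_one]
    have hx2 : z - ε • m₁ ∈ P := by
      apply hball
      rw [dist_eq_norm]
      have : z - ε • m₁ - z = -(ε • m₁) := by abel
      rw [this, norm_neg, norm_smul, hm₁, Real.norm_of_nonneg (le_of_lt hε), mul_one]
    have hA := hfac₁.2.1 _ hx1
    have hB2 := hfac₂.2.1 _ hx2
    rw [hm2eq] at hB2
    rw [inner_add_left, real_inner_smul_left, real_inner_self_eq_norm_sq, hm₁] at hA
    rw [inner_neg_right, inner_neg_right, inner_sub_left, real_inner_smul_left,
      real_inner_self_eq_norm_sq, hm₁] at hB2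
    nlinarith [hA, hB2]
  · right
    push_neg at hdis
    obtain ⟨b₀, hb₀⟩ := hextne
    obtain ⟨hb₀0, hfac₀⟩ := hfac b₀ hb₀
    set m := ‖b₀‖⁻¹ • b₀ with hmdef
    refine ⟨m, hfac₀, ?_⟩
    set C : Set (EuclideanSpace ℝ (Fin n)) := {x | c * ‖x‖ ≤ ⟪x, m⟫} with hC
    have hCconv : Convex ℝ C := by
      intro x hx x' hx' a b ha hb hab
      have h1 : c * ‖a • x + b • x'‖ ≤ c * (a * ‖x‖ + b * ‖x'‖) := by
        apply mul_le_mul_of_nonneg_left _ hc0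
        calc ‖a • x + b • x'‖ ≤ ‖a • x‖ + ‖b • x'‖ := norm_add_le _ _
        _ = a * ‖x‖ + b * ‖x'‖ := by
            rw [norm_smul, norm_smul, Real.norm_of_nonneg ha, Real.norm_of_nonneg hb]
      have h2 : c * (a * ‖x‖ + b * ‖x'‖) ≤ ⟪a • x + b • x', m⟫ := by
        rw [inner_add_left, real_inner_smul_left, real_inner_smul_left]
        have := mul_le_mul_of_nonneg_left hx ha
        have := mul_le_mul_of_nonneg_left hx' hb
        nlinarith [mul_le_mul_of_nonneg_left hx ha, mul_le_mul_of_nonneg_left hx' hb]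
      exact le_trans h1 h2
    have hCclosed : IsClosed C :=
      isClosed_le (continuous_const.mul continuous_norm)
        (Continuous.inner continuous_id continuous_const)
    have hsub : B.extremePoints ℝ ⊆ C := by
      intro b hb
      obtain ⟨hb0', hfacb⟩ := hfac b hb
      have hcle := hdis b hb b₀ hb₀
      rw [← hmdef] at hcle
      have hnb : (0:ℝ) < ‖b‖ := norm_pos_iff.mpr hb0'
      have : ⟪b, m⟫ = ‖b‖ * ⟪‖b‖⁻¹ • b, m⟫ := by
        rw [real_inner_smul_left, ← mul_assoc, mul_inv_cancel₀ (ne_of_gt hnb), one_mul]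
      rw [hC, Set.mem_setOf_eq, this]
      have h2 := mul_le_mul_of_nonneg_left hcle (le_of_lt hnb)
      linarith [h2, mul_comm c ‖b‖]
    have hBC : B ⊆ C := by
      rw [← hKM]
      exact closure_minimal (convexHull_min hsub hCconv) hCclosed
    have hνC := hBC hνB
    rw [hC, Set.mem_setOf_eq] at hνC
    rw [norm_smul, real_inner_smul_left, Real.norm_of_nonneg (le_of_lt (inv_pos.mpr htpos))] at hνC
    have hν' : c * ‖ν‖ ≤ ⟪ν, m⟫ := by
      have h := mul_le_mul_of_nonneg_left hνC (le_of_lt htpos)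
      calc c * ‖ν‖ = t * (c * (t⁻¹ * ‖ν‖)) := by
            rw [show t * (c * (t⁻¹ * ‖ν‖)) = (t * t⁻¹) * (c * ‖ν‖) by ring,
              mul_inv_cancel₀ (ne_of_gt htpos), one_mul]
      _ ≤ t * (t⁻¹ * ⟪ν, m⟫) := h
      _ = ⟪ν, m⟫ := by field_simp
    rw [real_inner_smul_left]
    have hnν : (0:ℝ) < ‖ν‖ := norm_pos_iff.mpr hν0
    calc c = ‖ν‖⁻¹ * (c * ‖ν‖) := by field_simp
    _ ≤ ‖ν‖⁻¹ * ⟪ν, m⟫ := mul_le_mul_of_nonneg_left hν' (inv_nonneg.mpr (norm_nonneg ν))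

lemma w'_bound {P : Set (EuclideanSpace ℝ (Fin n))} {y₁ y₂ n₁ n₂ : EuclideanSpace ℝ (Fin n)}
    (hy₁ : y₁ ∈ P) (h1 : FacetAt P y₁ n₁) (h2 : FacetAt P y₂ n₂)
    {γ : ℝ} (hγ : 0 < γ) (hc2 : ⟪n₁, n₂⟫ ^ 2 ≤ 1 - γ ^ 2)
    {Δ : ℝ} (hΔ : sSup ((fun x => ⟪x, n₂⟫) '' P) - ⟪y₁, n₂⟫ ≤ Δ)
    (w' : EuclideanSpace ℝ (Fin n))
    (hw'mem : w' ∈ (Submodule.span ℝ {n₁, n₂} : Submodule ℝ (EuclideanSpace ℝ (Fin n))))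
    (hw'1 : ⟪w', n₁⟫ = sSup ((fun y => ⟪y, n₁⟫) '' P))
    (hw'2 : ⟪w', n₂⟫ = sSup ((fun y => ⟪y, n₂⟫) '' P)) :
    Metric.infDist w'
      ((fun x => ((Submodule.orthogonalProjectionOnto (Submodule.span ℝ {n₁, n₂}) x :
        Submodule.span ℝ {n₁, n₂}) : EuclideanSpace ℝ (Fin n))) ''
        {x ∈ P | ⟪x, n₁⟫ = sSup ((fun x => ⟪x, n₁⟫) '' P)}) ≤ Δ / γ := by
  set L : Submodule ℝ (EuclideanSpace ℝ (Fin n)) := Submodule.span ℝ {n₁, n₂} with hL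
  have hn₁L : n₁ ∈ L := Submodule.subset_span (by simp)
  have hn₂L : n₂ ∈ L := Submodule.subset_span (by simp)
  have hn₁ : ‖n₁‖ = 1 := h1.1.1
  have hn₂ : ‖n₂‖ = 1 := h2.1.1
  -- y₁ belongs to the facet set
  have hy₁F : y₁ ∈ {x ∈ P | ⟪x, n₁⟫ = sSup ((fun x => ⟪x, n₁⟫) '' P)} := ⟨hy₁, h1.2.2⟩
  set q : EuclideanSpace ℝ (Fin n) := (Submodule.orthogonalProjectionOnto L y₁ : EuclideanSpace ℝ (Fin n))
    with hq
  have hqmem : q ∈ (fun x => ((Submodule.orthogonalProjectionOnto L x : L) : EuclideanSpace ℝ (Fin n))) ''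
      {x ∈ P | ⟪x, n₁⟫ = sSup ((fun x => ⟪x, n₁⟫) '' P)} := ⟨y₁, hy₁F, rfl⟩
  have hle := Metric.infDist_le_dist_of_mem (x := w') hqmem
  -- inner products of q agree with y₁ on L
  have hqinner : ∀ v ∈ L, ⟪y₁ - q, v⟫ = 0 := by
    intro v hv
    have h := Submodule.sub_starProjection_mem_orthogonal (K := L) y₁
    exact (Submodule.mem_orthogonal' L _).mp h v hv
  have hq1 : ⟪q, n₁⟫ = ⟪y₁, n₁⟫ := by
    have := hqinner n₁ hn₁L; rw [inner_sub_left] at this; linarith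
  have hq2 : ⟪q, n₂⟫ = ⟪y₁, n₂⟫ := by
    have := hqinner n₂ hn₂L; rw [inner_sub_left] at this; linarith
  set e : EuclideanSpace ℝ (Fin n) := w' - q with he
  have heL : e ∈ L := Submodule.sub_mem L hw'mem (SetLike.coe_mem _)
  set c : ℝ := ⟪n₁, n₂⟫ with hc
  set δ : ℝ := sSup ((fun x => ⟪x, n₂⟫) '' P) - ⟪y₁, n₂⟫ with hδ
  have hδ0 : 0 ≤ δ := by
    rw [hδ, ← h2.2.2]
    have := h2.2.1 y₁ hy₁
    linarith
  have he1 : ⟪e, n₁⟫ = 0 := by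
    rw [he, inner_sub_left, hq1, hw'1, h1.2.2]; ring
  have he2 : ⟪e, n₂⟫ = δ := by
    rw [he, inner_sub_left, hq2, hw'2, hδ]
  obtain ⟨α, β, hee⟩ := Submodule.mem_span_pair.mp heL
  have hinn11 : ⟪n₁, n₁⟫ = (1:ℝ) := by
    rw [real_inner_self_eq_norm_sq, hn₁]; norm_num
  have hinn22 : ⟪n₂, n₂⟫ = (1:ℝ) := by
    rw [real_inner_self_eq_norm_sq, hn₂]; norm_num
  have hr1 : α + β * c = 0 := by
    have : ⟪e, n₁⟫ = α + β * c := by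
      have hsym : ⟪n₂, n₁⟫ = ⟪n₁, n₂⟫ := real_inner_comm _ _
      rw [← hee, inner_add_left, real_inner_smul_left, real_inner_smul_left, hinn11, hsym, ← hc]
      ring
    rw [he1] at this; linarith
  have hr2 : α * c + β = δ := by
    have : ⟪e, n₂⟫ = α * c + β := by
      rw [← hee, inner_add_left, real_inner_smul_left, real_inner_smul_left, hinn22, ← hc]
      ring
    rw [he2] at this; linarith
  have hnorme : ‖e‖ ^ 2 = β * δ := by
    rw [← real_inner_self_eq_norm_sq, ← hee]
    rw [inner_add_left, real_inner_smul_left, real_inner_smul_left]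
    rw [real_inner_comm n₁ e, real_inner_comm n₂ e] at *
    rw [hee, he1, he2]
    ring
  have hβδ : δ = β * (1 - c ^ 2) := by linear_combination c * hr1 - hr2
  have hkey : ‖e‖ ^ 2 * (1 - c ^ 2) = δ ^ 2 := by
    rw [hnorme, hβδ]; ring
  have hγ2 : γ ^ 2 ≤ 1 - c ^ 2 := by rw [hc]; linarith [hc2]
  have hfin : ‖e‖ ≤ δ / γ := by
    have hsq : ‖e‖ ^ 2 ≤ (δ / γ) ^ 2 := by
      rw [div_pow, le_div_iff₀ (by positivity)]
      nlinarith [mul_le_mul_of_nonneg_left hγ2 (sq_nonneg ‖e‖)]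
    have h1' := Real.sqrt_le_sqrt hsq
    rwa [Real.sqrt_sq (norm_nonneg _), Real.sqrt_sq (by positivity)] at h1'
  have hdist : dist w' q = ‖e‖ := by rw [dist_eq_norm, he]
  have hΔγ : δ / γ ≤ Δ / γ := by
    apply (div_le_div_iff_of_pos_right hγ).mpr
    rw [hδ]; exact hΔ
  calc Metric.infDist w' _ ≤ dist w' q := hle
  _ = ‖e‖ := hdist
  _ ≤ δ / γ := hfin
  _ ≤ Δ / γ := hΔγ

end Auxiliary

set_option maxHeartbeats 1600000

/-- Geometric lemma: a convex polytope contained in a wedge of opening angle `π - κ` whose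
distance to the tip (the origin) is at most `s` has two facets whose normals make an angle in
`[κ/16, π)` and whose two-dimensional wedge has tip within distance `M_κ · s` of the projection
of the first facet. -/
theorem polytope_in_wedge_discordant_facets
    (κ : ℝ) (hκ₀ : 0 < κ) (hκπ : κ < Real.pi) :
    ∃ M : ℝ, 0 < M ∧
      ∀ (n : ℕ), 2 ≤ n →
      ∀ u₁ u₂ : EuclideanSpace ℝ (Fin n), ‖u₁‖ = 1 → ‖u₂‖ = 1 →
        Real.arccos ⟪u₁, u₂⟫ = κ →
      ∀ s : ℝ, 0 < s →
      ∀ P : Set (EuclideanSpace ℝ (Fin n)),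
        (∃ S : Finset (EuclideanSpace ℝ (Fin n)), P = convexHull ℝ (S : Set _)) →
        (interior P).Nonempty →
        P ⊆ {x | ⟪x, u₁⟫ ≤ 0 ∧ ⟪x, u₂⟫ ≤ 0} →
        Metric.infDist 0 P ≤ s →
        ∃ F₁ F₂ : Set (EuclideanSpace ℝ (Fin n)),
        ∃ n₁ n₂ : EuclideanSpace ℝ (Fin n),
          IsFacet P F₁ n₁ ∧ IsFacet P F₂ n₂ ∧
          Real.arccos ⟪n₁, n₂⟫ ∈ Set.Ico (κ / 16) Real.pi ∧
          ∀ w' : EuclideanSpace ℝ (Fin n),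
            w' ∈ (Submodule.span ℝ {n₁, n₂} : Submodule ℝ (EuclideanSpace ℝ (Fin n))) →
            ⟪w', n₁⟫ = sSup ((fun y => ⟪y, n₁⟫) '' P) →
            ⟪w', n₂⟫ = sSup ((fun y => ⟪y, n₂⟫) '' P) →
            Metric.infDist w'
              ((fun x => ((Submodule.orthogonalProjectionOnto (Submodule.span ℝ {n₁, n₂}) x :
                Submodule.span ℝ {n₁, n₂}) : EuclideanSpace ℝ (Fin n))) '' F₁) ≤ M * s := by
  have hπ := Real.pi_pos
  set c : ℝ := Real.cos (κ / 16) with hcdef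
  have hc0 : 0 ≤ c := Real.cos_nonneg_of_mem_Icc ⟨by linarith, by linarith⟩
  have hc1 : c < 1 := by
    have := Real.strictAntiOn_cos (Set.mem_Icc.mpr ⟨le_refl (0:ℝ), by linarith⟩)
      (Set.mem_Icc.mpr ⟨by linarith, by linarith⟩) (by linarith : (0:ℝ) < κ/16)
    rwa [Real.cos_zero] at this
  have harcc : Real.arccos c = κ / 16 := Real.arccos_cos (by linarith) (by linarith)
  set T : ℝ := 2 / (1 - c) + 2 with hTdef
  have hd1c : 0 < 1 - c := by linarith
  have hT2 : 2 ≤ T := by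
    have h : 0 ≤ 2 / (1 - c) := by positivity
    rw [hTdef]
    linarith
  have hT0 : 0 < T := by linarith
  have hcT : c ≤ 1 - 1 / T := by
    have h1 : 1 / T ≤ 1 / (2 / (1 - c)) := by
      apply one_div_le_one_div_of_le (by positivity)
      linarith
    rw [one_div_div] at h1
    linarith
  have hsin4 : 0 < Real.sin (κ / 4) := Real.sin_pos_of_pos_of_lt_pi (by linarith) (by linarith)
  refine ⟨6 * T / Real.sin (κ / 4) + 1, by positivity, ?_⟩
  intro n hn u₁ u₂ hu₁ hu₂ harc s hs P hPoly hint hW hdist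
  set M : ℝ := 6 * T / Real.sin (κ / 4) + 1 with hMdef
  have hM : 0 < M := by positivity
  obtain ⟨S, hP⟩ := hPoly
  have hPconv : Convex ℝ P := by rw [hP]; exact convex_convexHull ℝ _
  have hPcompact : IsCompact P := by rw [hP]; exact S.finite_toSet.isCompact_convexHull ℝ
  obtain ⟨z, hz⟩ := hint
  have hzP : z ∈ P := interior_subset hz
  have hPne : P.Nonempty := ⟨z, hzP⟩
  obtain ⟨ε₀, hε₀, hball₀⟩ := Metric.isOpen_iff.mp isOpen_interior z hz
  have hε : 0 < ε₀ / 2 := by linarith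
  have hball : ∀ w : EuclideanSpace ℝ (Fin n), dist w z ≤ ε₀ / 2 → w ∈ P := fun w hw =>
    interior_subset (hball₀ (lt_of_le_of_lt hw (by linarith)))
  -- basic inner product facts
  have hiu12 : ⟪u₁, u₂⟫ = Real.cos κ := by
    have h := abs_le.mp (abs_inner_unit hu₁ hu₂)
    rw [← harc, Real.cos_arccos h.1 h.2]
  have hcos2 : 0 < Real.cos (κ / 2) := Real.cos_pos_of_mem_Ioo ⟨by linarith, by linarith⟩
  have hcos2sq : Real.cos (κ / 2) ^ 2 = (1 + Real.cos κ) / 2 := by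
    have := Real.cos_sq (κ / 2)
    rw [show 2 * (κ / 2) = κ by ring] at this
    linarith
  set u : EuclideanSpace ℝ (Fin n) := (2 * Real.cos (κ / 2))⁻¹ • (u₁ + u₂) with hudef
  have hnorm12 : ‖u₁ + u₂‖ = 2 * Real.cos (κ / 2) := by
    have hsq : ‖u₁ + u₂‖ ^ 2 = (2 * Real.cos (κ / 2)) ^ 2 := by
      rw [norm_add_sq_real, hu₁, hu₂, hiu12]
      nlinarith [hcos2sq]
    have h1 := congrArg Real.sqrt hsq
    rwa [Real.sqrt_sq (norm_nonneg _), Real.sqrt_sq (by positivity)] at h1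
  have hu_norm : ‖u‖ = 1 := by
    rw [hudef, norm_smul, hnorm12, norm_inv, Real.norm_of_nonneg (by positivity)]
    field_simp
  have hinneru : ⟪u₁, u⟫ = Real.cos (κ / 2) := by
    rw [hudef, real_inner_smul_right, inner_add_right]
    have h11 : ⟪u₁, u₁⟫ = (1:ℝ) := by rw [real_inner_self_eq_norm_sq, hu₁]; norm_num
    rw [h11, hiu12]
    have : 1 + Real.cos κ = 2 * Real.cos (κ / 2) ^ 2 := by linarith [hcos2sq]
    rw [this]
    field_simp
  have harcu1u : Real.arccos ⟪u₁, u⟫ = κ / 2 := by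
    rw [hinneru, Real.arccos_cos (by linarith) (by linarith)]
  have hPu₁ : ∀ x ∈ P, ⟪x, u₁⟫ ≤ 0 := fun x hx => (hW hx).1
  have hPu : ∀ x ∈ P, ⟪x, u⟫ ≤ 0 := by
    intro x hx
    have h1 := (hW hx).1
    have h2 := (hW hx).2
    rw [hudef, real_inner_smul_right, inner_add_right]
    apply mul_nonpos_of_nonneg_of_nonpos
      (le_of_lt (inv_pos.mpr (mul_pos two_pos hcos2)))
    linarith
  -- the near point p
  obtain ⟨p, hpP, hpdist⟩ := hPcompact.exists_infDist_eq_dist hPne 0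
  have hpnorm : ‖p‖ ≤ s := by
    have : dist (0 : EuclideanSpace ℝ (Fin n)) p = ‖p‖ := by
      rw [dist_comm, dist_eq_norm, sub_zero]
    rw [← this, ← hpdist]
    exact hdist
  -- construction of the supporting data in a given direction
  have hcon : ∀ d : EuclideanSpace ℝ (Fin n), ‖d‖ = 1 → (∀ x ∈ P, ⟪x, d⟫ ≤ 0) →
      ∃ y ν : EuclideanSpace ℝ (Fin n), y ∈ P ∧ ν ≠ 0 ∧ (∀ x ∈ P, ⟪x - y, ν⟫ ≤ 0) ∧
        c ≤ ⟪‖ν‖⁻¹ • ν, d⟫ ∧ ‖y‖ ≤ 3 * (T * s) := by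
    intro d hd hPd
    have hdd : ⟪d, d⟫ = (1:ℝ) := by rw [real_inner_self_eq_norm_sq, hd]; norm_num
    set a : EuclideanSpace ℝ (Fin n) := p + (T * s) • d with hadef
    have hTs : 0 < T * s := by positivity
    have hpd : -s ≤ ⟪p, d⟫ := by
      have h := abs_le.mp (abs_real_inner_le_norm p d)
      rw [hd, mul_one] at h
      linarith [h.1, hpnorm]
    have had : 0 < ⟪a, d⟫ := by
      rw [hadef, inner_add_left, real_inner_smul_left, hdd]
      nlinarith [hT2, hs]
    have haP : a ∉ P := fun h => absurd (hPd a h) (not_le.mpr had)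
    obtain ⟨y, hyP, hyd⟩ := hPcompact.exists_infDist_eq_dist hPne a
    haveI : Nonempty P := hPne.to_subtype
    have hinf : ‖a - y‖ = ⨅ w : P, ‖a - (w : EuclideanSpace ℝ (Fin n))‖ := by
      rw [← dist_eq_norm]
      calc dist a y = Metric.infDist a P := hyd.symm
      _ = ⨅ w : P, dist a (w : EuclideanSpace ℝ (Fin n)) := Metric.infDist_eq_iInf
      _ = ⨅ w : P, ‖a - (w : EuclideanSpace ℝ (Fin n))‖ := by simp_rw [dist_eq_norm]
    have hvar := (norm_eq_iInf_iff_real_inner_le_zero hPconv hyP).mp hinf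
    set ν : EuclideanSpace ℝ (Fin n) := a - y with hνdef
    have hν0 : ν ≠ 0 := sub_ne_zero.mpr (fun h => haP (h ▸ hyP))
    have hν : ∀ x ∈ P, ⟪x - y, ν⟫ ≤ 0 := by
      intro x hx
      rw [real_inner_comm]
      exact hvar x hx
    have hνnorm : ‖ν‖ ≤ T * s := by
      have h1 : dist a y ≤ dist a p := by
        rw [← hyd]; exact Metric.infDist_le_dist_of_mem hpP
      rw [dist_eq_norm, dist_eq_norm, hadef] at h1
      have h2 : p + (T * s) • d - p = (T * s) • d := by abel
      rw [h2, norm_smul, hd, mul_one, Real.norm_of_nonneg (le_of_lt hTs)] at h1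
      exact h1
    have hνd : (T - 1) * s ≤ ⟪ν, d⟫ := by
      rw [hνdef, inner_sub_left, hadef, inner_add_left, real_inner_smul_left, hdd]
      have := hPd y hyP
      nlinarith [hpd]
    have hνpos : 0 < ‖ν‖ := norm_pos_iff.mpr hν0
    have hcle : c ≤ ⟪‖ν‖⁻¹ • ν, d⟫ := by
      rw [real_inner_smul_left]
      have h1 : (T * s)⁻¹ ≤ ‖ν‖⁻¹ := inv_anti₀ hνpos hνnorm
      have h2 : (T * s)⁻¹ * ((T - 1) * s) ≤ ‖ν‖⁻¹ * ⟪ν, d⟫ :=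
        mul_le_mul h1 hνd (by nlinarith [hT2, hs]) (le_of_lt (inv_pos.mpr hνpos))
      have h3 : (T * s)⁻¹ * ((T - 1) * s) = 1 - 1 / T := by
        field_simp
      linarith [hcT]
    have hynorm : ‖y‖ ≤ 3 * (T * s) := by
      have h1 : ‖y‖ ≤ ‖y - a‖ + ‖a‖ := by
        have := norm_add_le (y - a) a
        rwa [sub_add_cancel] at this
      have h2 : ‖y - a‖ = ‖ν‖ := by rw [hνdef, norm_sub_rev]
      have h3 : ‖a‖ ≤ s + T * s := by
        rw [hadef]
        have := norm_add_le p ((T * s) • d)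
        rw [norm_smul, hd, mul_one, Real.norm_of_nonneg (le_of_lt hTs)] at this
        linarith [hpnorm]
      have hsTs : s ≤ T * s := by nlinarith [hT2, hs]
      linarith [hνnorm]
    exact ⟨y, ν, hyP, hν0, hν, hcle, hynorm⟩
  obtain ⟨y₁, ν₁, hy₁P, hν₁0, hν₁, hν₁u₁, hy₁norm⟩ := hcon u₁ hu₁ hPu₁
  obtain ⟨y₂, ν₂, hy₂P, hν₂0, hν₂, hν₂u, hy₂norm⟩ := hcon u hu_norm hPu
  -- the same-point finisher
  have finish_same : ∀ y n₁ n₂ : EuclideanSpace ℝ (Fin n), y ∈ P → FacetAt P y n₁ →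
      FacetAt P y n₂ → -1 < ⟪n₁, n₂⟫ → ⟪n₁, n₂⟫ < c →
      ∃ F₁ F₂ : Set (EuclideanSpace ℝ (Fin n)),
      ∃ n₁' n₂' : EuclideanSpace ℝ (Fin n),
        IsFacet P F₁ n₁' ∧ IsFacet P F₂ n₂' ∧
        Real.arccos ⟪n₁', n₂'⟫ ∈ Set.Ico (κ / 16) Real.pi ∧
        ∀ w' : EuclideanSpace ℝ (Fin n),
          w' ∈ (Submodule.span ℝ {n₁', n₂'} : Submodule ℝ (EuclideanSpace ℝ (Fin n))) →
          ⟪w', n₁'⟫ = sSup ((fun y => ⟪y, n₁'⟫) '' P) →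
          ⟪w', n₂'⟫ = sSup ((fun y => ⟪y, n₂'⟫) '' P) →
          Metric.infDist w'
            ((fun x => ((Submodule.orthogonalProjectionOnto (Submodule.span ℝ {n₁', n₂'}) x :
              Submodule.span ℝ {n₁', n₂'}) : EuclideanSpace ℝ (Fin n))) '' F₁) ≤ M * s := by
    intro y n₁ n₂ hyP h1 h2 hgt hlt
    refine ⟨_, _, n₁, n₂, h1.1, h2.1, ⟨?_, ?_⟩, ?_⟩
    · rw [← harcc]; exact my_arccos_le (le_of_lt hlt)
    · rcases lt_or_eq_of_le (Real.arccos_le_pi ⟪n₁, n₂⟫) with h | h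
      · exact h
      · exfalso
        rw [Real.arccos_eq_pi] at h
        linarith
    · intro w' hw'mem hw'1 hw'2
      have hcsq : ⟪n₁, n₂⟫ ^ 2 < 1 := by
        have habs : |⟪n₁, n₂⟫| < 1 := abs_lt.mpr ⟨hgt, lt_of_lt_of_le hlt (by linarith)⟩
        nlinarith [habs, abs_nonneg ⟪n₁, n₂⟫, sq_abs ⟪n₁, n₂⟫]
      set γ : ℝ := Real.sqrt (1 - ⟪n₁, n₂⟫ ^ 2) with hγdef
      have hγpos : 0 < γ := Real.sqrt_pos.mpr (by linarith)
      have hγsq : γ ^ 2 = 1 - ⟪n₁, n₂⟫ ^ 2 := Real.sq_sqrt (by linarith)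
      have hΔ : sSup ((fun x => ⟪x, n₂⟫) '' P) - ⟪y, n₂⟫ ≤ 0 := by
        rw [← h2.2.2]
        simp
      have hb := w'_bound hyP h1 h2 hγpos (by linarith [hγsq]) hΔ w' hw'mem hw'1 hw'2
      rw [zero_div] at hb
      calc Metric.infDist w' _ ≤ 0 := hb
      _ ≤ M * s := by positivity
  -- dichotomies
  rcases facet_dichotomy hn hP hε hball hy₁P hν₁0 hν₁ hc0 hc1 with h1 | hD₁
  · obtain ⟨m₁, m₂, hf1, hf2, hgt, hlt⟩ := h1
    exact finish_same y₁ m₁ m₂ hy₁P hf1 hf2 hgt hlt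
  rcases facet_dichotomy hn hP hε hball hy₂P hν₂0 hν₂ hc0 hc1 with h2 | hD₂
  · obtain ⟨m₁, m₂, hf1, hf2, hgt, hlt⟩ := h2
    exact finish_same y₂ m₁ m₂ hy₂P hf1 hf2 hgt hlt
  -- main case: facets near u₁ and u
  obtain ⟨n₁, hf1, hnuh1⟩ := hD₁
  obtain ⟨n₂, hf2, hnuh2⟩ := hD₂
  have hn₁norm : ‖n₁‖ = 1 := hf1.1.1
  have hn₂norm : ‖n₂‖ = 1 := hf2.1.1
  have hnuh1norm : ‖(‖ν₁‖⁻¹ • ν₁ : EuclideanSpace ℝ (Fin n))‖ = 1 := by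
    rw [norm_smul, norm_inv, norm_norm,
      inv_mul_cancel₀ (ne_of_gt (norm_pos_iff.mpr hν₁0))]
  have hnuh2norm : ‖(‖ν₂‖⁻¹ • ν₂ : EuclideanSpace ℝ (Fin n))‖ = 1 := by
    rw [norm_smul, norm_inv, norm_norm,
      inv_mul_cancel₀ (ne_of_gt (norm_pos_iff.mpr hν₂0))]
  -- angle bounds
  have hang1 : Real.arccos ⟪n₁, u₁⟫ ≤ κ / 8 := by
    have t1 : Real.arccos ⟪n₁, ‖ν₁‖⁻¹ • ν₁⟫ ≤ κ / 16 := by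
      rw [real_inner_comm, ← harcc]
      exact my_arccos_le hnuh1
    have t2 : Real.arccos ⟪(‖ν₁‖⁻¹ • ν₁ : EuclideanSpace ℝ (Fin n)), u₁⟫ ≤ κ / 16 := by
      rw [← harcc]
      exact my_arccos_le hν₁u₁
    have := arccos_inner_triangle hn₁norm hnuh1norm hu₁
    linarith
  have hang2 : Real.arccos ⟪n₂, u⟫ ≤ κ / 8 := by
    have t1 : Real.arccos ⟪n₂, ‖ν₂‖⁻¹ • ν₂⟫ ≤ κ / 16 := by
      rw [real_inner_comm, ← harcc]
      exact my_arccos_le hnuh2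
    have t2 : Real.arccos ⟪(‖ν₂‖⁻¹ • ν₂ : EuclideanSpace ℝ (Fin n)), u⟫ ≤ κ / 16 := by
      rw [← harcc]
      exact my_arccos_le hν₂u
    have := arccos_inner_triangle hn₂norm hnuh2norm hu_norm
    linarith
  have hcomm1 : Real.arccos ⟪u₁, n₁⟫ = Real.arccos ⟪n₁, u₁⟫ := by rw [real_inner_comm]
  have hcomm2 : Real.arccos ⟪u, n₂⟫ = Real.arccos ⟪n₂, u⟫ := by rw [real_inner_comm]
  have hθlo : κ / 4 ≤ Real.arccos ⟪n₁, n₂⟫ := by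
    have c1 := arccos_inner_triangle hu₁ hn₁norm hu_norm  -- arccos ⟪u₁,u⟫ ≤ arccos⟪u₁,n₁⟫ + arccos⟪n₁,u⟫
    have c2 := arccos_inner_triangle hn₁norm hn₂norm hu_norm -- arccos ⟪n₁,u⟫ ≤ arccos ⟪n₁,n₂⟫ + arccos ⟪n₂,u⟫
    rw [harcu1u] at c1
    rw [hcomm1] at c1
    linarith
  have hθhi : Real.arccos ⟪n₁, n₂⟫ ≤ 3 * κ / 4 := by
    have c1 := arccos_inner_triangle hn₁norm hu₁ hn₂norm  -- arccos⟪n₁,n₂⟫ ≤ arccos⟪n₁,u₁⟫ + arccos⟪u₁,n₂⟫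
    have c2 := arccos_inner_triangle hu₁ hu_norm hn₂norm  -- arccos⟪u₁,n₂⟫ ≤ arccos⟪u₁,u⟫ + arccos⟪u,n₂⟫
    rw [harcu1u] at c2
    rw [hcomm2] at c2
    linarith
  refine ⟨_, _, n₁, n₂, hf1.1, hf2.1, ⟨by linarith, by linarith⟩, ?_⟩
  intro w' hw'mem hw'1 hw'2
  -- bound on inner product
  have habs12 := abs_le.mp (abs_inner_unit hn₁norm hn₂norm)
  have hceq : ⟪n₁, n₂⟫ = Real.cos (Real.arccos ⟪n₁, n₂⟫) :=
    (Real.cos_arccos habs12.1 habs12.2).symm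
  have hupper : ⟪n₁, n₂⟫ ≤ Real.cos (κ / 4) := by
    rw [hceq]
    exact Real.cos_le_cos_of_nonneg_of_le_pi (by linarith) (Real.arccos_le_pi _) hθlo
  have hlower : Real.cos (3 * κ / 4) ≤ ⟪n₁, n₂⟫ := by
    rw [hceq]
    exact Real.cos_le_cos_of_nonneg_of_le_pi (Real.arccos_nonneg _) (by linarith) hθhi
  have hcos4pos : 0 < Real.cos (κ / 4) := Real.cos_pos_of_mem_Ioo ⟨by linarith, by linarith⟩
  have hsumpos : 0 ≤ Real.cos (3 * κ / 4) + Real.cos (κ / 4) := by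
    have e1 : (3 * κ / 4 + κ / 4) / 2 = κ / 2 := by ring
    have e2 : (3 * κ / 4 - κ / 4) / 2 = κ / 4 := by ring
    rw [Real.cos_add_cos, e1, e2]
    positivity
  have habsb : |⟪n₁, n₂⟫| ≤ Real.cos (κ / 4) := abs_le.mpr ⟨by linarith, hupper⟩
  have hc2 : ⟪n₁, n₂⟫ ^ 2 ≤ 1 - Real.sin (κ / 4) ^ 2 := by
    have h1 : ⟪n₁, n₂⟫ ^ 2 ≤ Real.cos (κ / 4) ^ 2 := sq_le_sq' (by linarith) hupper
    have h2 := Real.sin_sq_add_cos_sq (κ / 4)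
    linarith
  have hΔbound : sSup ((fun x => ⟪x, n₂⟫) '' P) - ⟪y₁, n₂⟫ ≤ 6 * (T * s) := by
    have hs2 : sSup ((fun x => ⟪x, n₂⟫) '' P) = ⟪y₂, n₂⟫ := (hf2.2.2).symm
    have b1 : |⟪y₂, n₂⟫| ≤ 3 * (T * s) := by
      have := abs_real_inner_le_norm y₂ n₂
      rw [hn₂norm, mul_one] at this
      linarith [abs_le.mp this |>.2, abs_le.mp this |>.1, hy₂norm,
        le_abs_self ⟪y₂, n₂⟫, neg_abs_le ⟪y₂, n₂⟫]
      
    have b2 : |⟪y₁, n₂⟫| ≤ 3 * (T * s) := by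
      have := abs_real_inner_le_norm y₁ n₂
      rw [hn₂norm, mul_one] at this
      linarith [hy₁norm]
    rw [hs2]
    have := abs_le.mp b1
    have := abs_le.mp b2
    linarith [abs_le.mp b1 |>.2, abs_le.mp b2 |>.1]
  have hb := w'_bound hy₁P hf1 hf2 hsin4 hc2 hΔbound w' hw'mem hw'1 hw'2
  have hfinal : 6 * (T * s) / Real.sin (κ / 4) ≤ M * s := by
    have he : 6 * (T * s) / Real.sin (κ / 4) = (6 * T / Real.sin (κ / 4)) * s := by ring
    rw [he, hMdef]
    exact mul_le_mul_of_nonneg_right (le_add_of_nonneg_right zero_le_one) hs.le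
  exact le_trans hb hfinal
end
end

section
/- For every n ≥ 2 and every M > 0 there exists C > 0 such that for all α > C the following holds. Let t₀ = 0, t_{2n+1} = 1 and let 0 ≤ t₁ ≤ t₂ ≤ ... ≤ t_{2n} ≤ 1 with 0 < tᵢ < 1 for 1 ≤ i ≤ 2n. Let b₀ = (0,0) and, for 1 ≤ i ≤ 2n+1, let bᵢ ∈ ℝ² be points such that |b_{i+1} − bᵢ| ≤ φ(α)·√(t_{i+1} − tᵢ) + α^{−2n−1} for all 0 ≤ i ≤ 2n. Let w₀ ∈ ℝ² and suppose there exists an index 0 ≤ j₀ ≤ 2n+1 with |b_{j₀} − w₀| < M·φ(α)²/√α. Then there exists an index 0 ≤ j ≤ 2n such that t_{j+1} − t_j ≥ α^{1/(10n)} · max( min(|b_j − w₀|, |b_{j+1} − w₀|)², 1/α ). -/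
/-!
Suppose every interval were short: `t (j+1) - t j < β · max (m_j², 1/α)` with `β = α^(1/(10n))`
and `m_j` the smaller distance of `b j`, `b (j+1)` to `w₀`. Then the step bound gives
`‖b (j+1) - b j‖ ≤ (φ√β + 1) · max (m_j, α^(-1/2))`, so, walking away from `j₀`, the distance to
`w₀` grows by a factor at most `φ√β + 2` per step, and every `b j` lies within
`E = (φ√β + 2)^(2n+1) (Mφ² + 1)/√α` of `w₀`. Summing the intervals gives `1 < (2n+1) β E²`.
But `φ(α) = α^(o(1))` and `β^(2n+2) ≤ α^(2/5)`, so `(2n+1) β E² = O(α^(-1/2 + o(1)))`.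
-/

open Real Filter

noncomputable section

def phi (α : ℝ) : ℝ := Real.exp (Real.sqrt (Real.log α))

theorem one_le_phi (α : ℝ) : 1 ≤ phi α := one_le_exp (sqrt_nonneg _)

theorem phi_pos (α : ℝ) : 0 < phi α := exp_pos _

theorem phi_le_rpow {α δ : ℝ} (hα : 0 < α) (hδ : 0 < δ) (hlog : 1 / δ ^ 2 ≤ log α) :
    phi α ≤ α ^ δ := by
  have hL : 0 ≤ log α := le_trans (by positivity) hlog
  have hδL : 1 ≤ δ * √(log α) := by
    rw [← sqrt_le_sqrt_iff hL, sqrt_div' _ (sq_nonneg δ), sqrt_one, sqrt_sq hδ.le] at hlog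
    rwa [div_le_iff₀ hδ, mul_comm] at hlog
  rw [phi, rpow_def_of_pos hα, exp_le_exp]
  calc √(log α) ≤ δ * √(log α) * √(log α) := le_mul_of_one_le_left (sqrt_nonneg _) hδL
    _ = log α * δ := by rw [mul_assoc, mul_self_sqrt hL, mul_comm]

theorem eventually_phi_le_rpow {δ : ℝ} (hδ : 0 < δ) : ∀ᶠ α in atTop, phi α ≤ α ^ δ := by
  filter_upwards [eventually_gt_atTop 0, tendsto_log_atTop.eventually_ge_atTop (1 / δ ^ 2)]
    with α hα hlog using phi_le_rpow hα hδ hlog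

theorem sub_lt_mul_of_forall_succ_sub_lt {t : ℕ → ℝ} {c : ℝ} {N : ℕ} (hN : 0 < N)
    (h : ∀ j < N, t (j + 1) - t j < c) : t N - t 0 < N * c := by
  have hsum := Finset.sum_lt_sum_of_nonempty (Finset.nonempty_range_iff.mpr hN.ne')
    fun j hj => h j (Finset.mem_range.mp hj)
  rwa [Finset.sum_range_sub, Finset.sum_const, Finset.card_range, nsmul_eq_mul] at hsum

theorem le_mul_max_of_le_mul_sqrt_add {d φ β Δ a m ε : ℝ} (hφ : 0 ≤ φ) (hβ : 0 ≤ β)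
    (hm : 0 ≤ m) (hε : 0 ≤ ε) (ha : a ≤ ε) (hd : d ≤ φ * √Δ + a)
    (hΔ : Δ ≤ β * max (m ^ 2) (ε ^ 2)) :
    d ≤ (φ * √β + 1) * max m ε := by
  set X := max m ε
  have hX : 0 ≤ X := hm.trans (le_max_left _ _)
  have hsq : √Δ ≤ √β * X := by
    calc √Δ ≤ √(β * X ^ 2) := by
          refine sqrt_le_sqrt (hΔ.trans (mul_le_mul_of_nonneg_left (max_le ?_ ?_) hβ))
          · exact pow_le_pow_left₀ hm (le_max_left _ _) 2
          · exact pow_le_pow_left₀ hε (le_max_right _ _) 2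
      _ = √β * X := by rw [sqrt_mul' _ (sq_nonneg X), sqrt_sq hX]
  calc d ≤ φ * √Δ + a := hd
    _ ≤ φ * (√β * X) + X := by gcongr; exact ha.trans (le_max_right _ _)
    _ = (φ * √β + 1) * X := by ring

section NormedGroup

variable {E : Type*} [SeminormedAddCommGroup E]

theorem norm_sub_le_of_norm_sub_le_mul_max {x y w : E} {K ε R : ℝ} (hK : 0 ≤ K) (hεR : ε ≤ R)
    (hxy : ‖y - x‖ ≤ K * max (min ‖x - w‖ ‖y - w‖) ε) (hx : ‖x - w‖ ≤ R) :
    ‖y - w‖ ≤ (K + 1) * R :=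
  calc ‖y - w‖ ≤ ‖y - x‖ + ‖x - w‖ := norm_sub_le_norm_sub_add_norm_sub _ _ _
    _ ≤ K * R + R := by
      gcongr
      exact le_trans hxy (mul_le_mul_of_nonneg_left (max_le ((min_le_left _ _).trans hx) hεR) hK)
    _ = (K + 1) * R := by ring

theorem norm_sub_le_pow_mul_of_chain (f : ℕ → E) (w : E) {K ε R : ℝ} {N j₀ : ℕ}
    (hK : 0 ≤ K) (hεR : ε ≤ R)
    (hstep : ∀ j < N, ‖f (j + 1) - f j‖ ≤ K * max (min ‖f j - w‖ ‖f (j + 1) - w‖) ε)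
    (hj₀ : j₀ ≤ N) (h₀ : ‖f j₀ - w‖ ≤ R) {j : ℕ} (hj : j ≤ N) :
    ‖f j - w‖ ≤ (K + 1) ^ N * R := by
  have hR : 0 ≤ R := (norm_nonneg _).trans h₀
  have hK1 : 1 ≤ K + 1 := by linarith
  have hεR' : ∀ k, ε ≤ (K + 1) ^ k * R := fun k =>
    hεR.trans (le_mul_of_one_le_left hR (one_le_pow₀ hK1))
  rcases le_total j₀ j with hle | hle
  · have hfwd : ∀ i (hi : j₀ ≤ i), i ≤ N → ‖f i - w‖ ≤ (K + 1) ^ (i - j₀) * R := by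
      refine Nat.le_induction (fun _ => by simpa using h₀) fun i hi ih hiN => ?_
      rw [Nat.sub_add_comm hi, pow_succ, mul_comm _ (K + 1), mul_assoc]
      exact norm_sub_le_of_norm_sub_le_mul_max hK (hεR' _) (hstep i (by omega)) (ih (by omega))
    exact (hfwd j hle hj).trans
      (mul_le_mul_of_nonneg_right (pow_le_pow_right₀ hK1 (by omega)) hR)
  · have hbwd : ∀ i ≤ j₀, ‖f i - w‖ ≤ (K + 1) ^ (j₀ - i) * R := by
      refine fun i hi => Nat.decreasingInduction (fun i hi ih => ?_) (by simpa using h₀) hi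
      have h := hstep i (by omega)
      rw [norm_sub_rev, min_comm] at h
      rw [show j₀ - i = j₀ - (i + 1) + 1 by omega, pow_succ, mul_comm _ (K + 1), mul_assoc]
      exact norm_sub_le_of_norm_sub_le_mul_max hK (hεR' _) h ih
    exact (hbwd j hle).trans
      (mul_le_mul_of_nonneg_right (pow_le_pow_right₀ hK1 (by omega)) hR)

theorem sub_lt_mul_sq_of_forall_succ_sub_lt {t : ℕ → ℝ} {b : ℕ → E} {w : E} {N j₀ : ℕ}
    {φ β a ε : ℝ} (hN : 0 < N) (hφ : 0 ≤ φ) (hβ : 0 ≤ β) (hε : 0 ≤ ε) (ha : a ≤ ε)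
    (hb : ∀ j < N, ‖b (j + 1) - b j‖ ≤ φ * √(t (j + 1) - t j) + a)
    (hshort : ∀ j < N, t (j + 1) - t j < β * max (min ‖b j - w‖ ‖b (j + 1) - w‖ ^ 2) (ε ^ 2))
    (hj₀ : j₀ ≤ N) :
    t N - t 0 < N * (β * ((φ * √β + 2) ^ N * (‖b j₀ - w‖ + ε)) ^ 2) := by
  set R := ‖b j₀ - w‖ + ε
  have hεR : ε ≤ R := le_add_of_nonneg_left (norm_nonneg _)
  have hK : 0 ≤ φ * √β := mul_nonneg hφ (sqrt_nonneg _)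
  have hRE : R ≤ (φ * √β + 2) ^ N * R :=
    le_mul_of_one_le_left (by positivity) (one_le_pow₀ (by linarith))
  have hnear : ∀ j ≤ N, ‖b j - w‖ ≤ (φ * √β + 2) ^ N * R := by
    intro j hj
    convert norm_sub_le_pow_mul_of_chain b w (by linarith) hεR
      (fun j hj => le_mul_max_of_le_mul_sqrt_add hφ hβ (by positivity) hε ha (hb j hj)
        (hshort j hj).le) hj₀ (le_add_of_nonneg_right hε) hj using 2
    ring
  refine sub_lt_mul_of_forall_succ_sub_lt hN fun j hj => (hshort j hj).trans_le
    (mul_le_mul_of_nonneg_left (max_le ?_ ?_) hβ)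
  · exact pow_le_pow_left₀ (by positivity) ((min_le_left _ _).trans (hnear j hj.le)) 2
  · exact pow_le_pow_left₀ hε (hεR.trans hRE) 2

end NormedGroup

theorem rpow_one_div_ten_mul_pow_le {α : ℝ} (hα : 1 ≤ α) (n : ℕ) :
    (α ^ (1 / (10 * (n : ℝ)))) ^ (2 * n + 2) ≤ α ^ (2 / 5 : ℝ) := by
  rw [← rpow_natCast, ← rpow_mul (by linarith)]
  refine rpow_le_rpow_of_exponent_le hα ?_
  rcases n.eq_zero_or_pos with rfl | hn
  · norm_num -- the exponent is `1 / 0 * 2 = 0`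
  · have hn' : (1 : ℝ) ≤ n := by exact_mod_cast hn
    push_cast
    rw [div_mul_eq_mul_div, one_mul, div_le_div_iff₀ (by positivity) (by norm_num)]
    linarith

theorem mul_sq_lt_one_of_phi_pow_le (n : ℕ) {M α R : ℝ} (hM : 0 ≤ M) (hα : 1 ≤ α)
    (hφ : phi α ^ (4 * n + 6) ≤ α ^ (1 / 10 : ℝ))
    (hc : (2 * n + 1) * 9 ^ (2 * n + 1) * (M + 1) ^ 2 < √α)
    (hR : 0 ≤ R) (hRα : R ≤ (M * phi α ^ 2 + 1) / √α) :
    (2 * n + 1) * α ^ (1 / (10 * (n : ℝ))) *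
      ((phi α * √(α ^ (1 / (10 * (n : ℝ)))) + 2) ^ (2 * n + 1) * R) ^ 2 < 1 := by
  set β := α ^ (1 / (10 * (n : ℝ)))
  set φ := phi α
  have hφ1 : 1 ≤ φ := one_le_phi α
  have hβ1 : 1 ≤ β := one_le_rpow hα (by positivity)
  have hsβ : 1 ≤ √β := one_le_sqrt.mpr hβ1
  have hstep : (φ * √β + 2) ^ 2 ≤ 9 * φ ^ 2 * β := by
    have h1 : 1 ≤ φ * √β := one_le_mul_of_one_le_of_one_le hφ1 hsβ
    have h2 : (φ * √β) ^ 2 = φ ^ 2 * β := by rw [mul_pow, sq_sqrt (by linarith)]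
    nlinarith
  have hMφ : M * φ ^ 2 + 1 ≤ (M + 1) * φ ^ 2 := by nlinarith [one_le_pow₀ (n := 2) hφ1]
  have hsα : 0 < √α := sqrt_pos.mpr (by linarith)
  calc (2 * n + 1) * β * ((φ * √β + 2) ^ (2 * n + 1) * R) ^ 2
      = (2 * n + 1) * β * ((φ * √β + 2) ^ 2) ^ (2 * n + 1) * R ^ 2 := by
        rw [mul_pow, ← pow_mul, pow_mul']; ring
    _ ≤ (2 * n + 1) * β * (9 * φ ^ 2 * β) ^ (2 * n + 1) * ((M + 1) * φ ^ 2 / √α) ^ 2 := by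
      gcongr
      exact hRα.trans (by gcongr)
    _ = (2 * n + 1) * 9 ^ (2 * n + 1) * (M + 1) ^ 2 * φ ^ (4 * n + 6) * β ^ (2 * n + 2) /
          √α ^ 2 := by
      ring
    _ ≤ (2 * n + 1) * 9 ^ (2 * n + 1) * (M + 1) ^ 2 * α ^ (1 / 10 : ℝ) * α ^ (2 / 5 : ℝ) /
          √α ^ 2 := by
      gcongr
      exact rpow_one_div_ten_mul_pow_le hα n
    _ = (2 * n + 1) * 9 ^ (2 * n + 1) * (M + 1) ^ 2 / √α := by
      rw [mul_assoc _ (α ^ _), ← rpow_add (by linarith),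
        show (1 / 10 + 2 / 5 : ℝ) = 1 / 2 by norm_num, ← sqrt_eq_rpow]
      field_simp
    _ < 1 := by rwa [div_lt_one hsα]

theorem eventually_mul_sq_lt_one (n : ℕ) {M : ℝ} (hM : 0 ≤ M) :
    ∀ᶠ α in atTop, 1 ≤ α ∧ ∀ R, 0 ≤ R → R ≤ (M * phi α ^ 2 + 1) / √α →
      (2 * n + 1) * α ^ (1 / (10 * (n : ℝ))) *
        ((phi α * √(α ^ (1 / (10 * (n : ℝ)))) + 2) ^ (2 * n + 1) * R) ^ 2 < 1 := by
  have hδ : (0 : ℝ) < 1 / (10 * (4 * n + 6)) := by positivity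
  filter_upwards [eventually_ge_atTop 1, eventually_phi_le_rpow hδ,
    tendsto_sqrt_atTop.eventually_gt_atTop ((2 * n + 1) * 9 ^ (2 * n + 1) * (M + 1) ^ 2)]
    with α hα hφ hc
  refine ⟨hα, fun R hR hRα => mul_sq_lt_one_of_phi_pow_le n hM hα ?_ hc hR hRα⟩
  calc phi α ^ (4 * n + 6) ≤ (α ^ (1 / (10 * (4 * n + 6) : ℝ))) ^ (4 * n + 6) := by
        gcongr
        linarith [one_le_phi α]
    _ = α ^ (1 / 10 : ℝ) := by
        rw [← rpow_natCast, ← rpow_mul (by linarith)]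
        congr 1
        push_cast
        field_simp

theorem exists_special_interval_general (n : ℕ) (M : ℝ) (hM : 0 < M) :
    ∃ C : ℝ, 0 < C ∧
      ∀ α : ℝ, C < α →
      ∀ t : ℕ → ℝ, t 0 = 0 → t (2 * n + 1) = 1 →
        (∀ i j : ℕ, i ≤ j → j ≤ 2 * n + 1 → t i ≤ t j) →
        (∀ i : ℕ, 1 ≤ i → i ≤ 2 * n → 0 < t i ∧ t i < 1) →
      ∀ b : ℕ → EuclideanSpace ℝ (Fin 2), b 0 = 0 →
        (∀ i : ℕ, i ≤ 2 * n →
          ‖b (i + 1) - b i‖ ≤ phi α * Real.sqrt (t (i + 1) - t i) + α ^ (-(2 * (n : ℝ)) - 1)) →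
      ∀ w₀ : EuclideanSpace ℝ (Fin 2),
        (∃ j₀ : ℕ, j₀ ≤ 2 * n + 1 ∧ ‖b j₀ - w₀‖ < M * phi α ^ 2 / Real.sqrt α) →
        ∃ j : ℕ, j ≤ 2 * n ∧
          t (j + 1) - t j ≥ α ^ (1 / (10 * (n : ℝ))) *
            max (min ‖b j - w₀‖ ‖b (j + 1) - w₀‖ ^ 2) (1 / α) := by
  obtain ⟨C, hC⟩ := eventually_atTop.mp (eventually_mul_sq_lt_one n hM.le)
  refine ⟨C, one_pos.trans_le (hC C le_rfl).1,
    fun α hα t ht0 ht1 _ _ b _ hb w₀ ⟨j₀, hj₀, hw₀⟩ => ?_⟩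
  obtain ⟨hα1, hsmall⟩ := hC α hα.le
  by_contra! hshort
  have hinv : 1 / α = (1 / √α) ^ 2 := by rw [div_pow, one_pow, sq_sqrt (by linarith)]
  have herr : α ^ (-(2 * (n : ℝ)) - 1) ≤ 1 / √α :=
    calc α ^ (-(2 * (n : ℝ)) - 1) ≤ α ^ (-(1 / 2 : ℝ)) :=
          rpow_le_rpow_of_exponent_le hα1 (by linarith [(Nat.cast_nonneg n : (0 : ℝ) ≤ n)])
      _ = 1 / √α := by rw [rpow_neg (by linarith), ← sqrt_eq_rpow, inv_eq_one_div]
  have htotal := sub_lt_mul_sq_of_forall_succ_sub_lt (by omega) (phi_pos α).le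
    (by positivity) (by positivity) herr (fun j hj => hb j (by omega))
    (fun j hj => hinv ▸ hshort j (by omega)) hj₀
  rw [ht0, ht1, sub_zero] at htotal
  push_cast at htotal
  have hR : ‖b j₀ - w₀‖ + 1 / √α ≤ (M * phi α ^ 2 + 1) / √α := by
    rw [add_div]
    exact add_le_add hw₀.le le_rfl
  linarith [hsmall _ (by positivity) hR]

/-- Existence of a "special" interval: if consecutive points `b i ∈ ℝ²` move at Brownian speed
over the time intervals `[t i, t (i+1)]` and some `b j₀` is within `M φ(α)²/√α` of `w₀`, then
some time interval is much longer than the squared distance of its endpoints to `w₀`. -/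
theorem exists_special_interval (n : ℕ) (hn : 2 ≤ n) (M : ℝ) (hM : 0 < M) :
    ∃ C : ℝ, 0 < C ∧
      ∀ α : ℝ, C < α →
      ∀ t : ℕ → ℝ, t 0 = 0 → t (2 * n + 1) = 1 →
        (∀ i j : ℕ, i ≤ j → j ≤ 2 * n + 1 → t i ≤ t j) →
        (∀ i : ℕ, 1 ≤ i → i ≤ 2 * n → 0 < t i ∧ t i < 1) →
      ∀ b : ℕ → EuclideanSpace ℝ (Fin 2), b 0 = 0 →
        (∀ i : ℕ, i ≤ 2 * n →
          ‖b (i + 1) - b i‖ ≤ phi α * Real.sqrt (t (i + 1) - t i) + α ^ (-(2 * (n : ℝ)) - 1)) →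
      ∀ w₀ : EuclideanSpace ℝ (Fin 2),
        (∃ j₀ : ℕ, j₀ ≤ 2 * n + 1 ∧ ‖b j₀ - w₀‖ < M * phi α ^ 2 / Real.sqrt α) →
        ∃ j : ℕ, j ≤ 2 * n ∧
          t (j + 1) - t j ≥ α ^ (1 / (10 * (n : ℝ))) *
            max (min ‖b j - w₀‖ ‖b (j + 1) - w₀‖ ^ 2) (1 / α) :=
  exists_special_interval_general n M hM

end
end

section
/- For every n ≥ 2 there exists C > 0 such that for every a with 0 < a < e^{−1}: ∫_{Δ_n × Δ_n} 1{t(r,s) ∈ Z_a} · (t₁(r,s)·(1 − t_{2n}(r,s)))^{−1/2} · ∏_{i=2}^{2n} (t_i(r,s) − t_{i−1}(r,s))^{−1} dr ds ≤ C·|log a|^C. -/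
noncomputable section

/-- The simplex `Δ_n = {r ∈ [0,1]^n : r₁ < ⋯ < r_n}`. -/
def Delta (n : ℕ) : Set (Fin n → ℝ) :=
  {r | (∀ i, r i ∈ Set.Icc (0 : ℝ) 1) ∧ StrictMono r}

/-- The `2n` coordinates of `r` and `s` arranged in increasing order (indexed by `0,…,2n−1`). -/
def sortedMerge (n : ℕ) (r s : Fin n → ℝ) : ℕ → ℝ := fun i =>
  ((Multiset.ofList (List.ofFn r ++ List.ofFn s)).sort (· ≤ ·)).getD i 0

/-- Membership in `Z_a ⊆ ℝ^{2n}` for a sequence `T` representing `(z₁,…,z_{2n}) = (T 0,…,T (2n−1))`: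
`z₁ ≥ a`, `1 − z_{2n} ≥ a` and `z_j − z_{j−1} ≥ a` for `2 ≤ j ≤ 2n`. -/
def memZ (n : ℕ) (a : ℝ) (T : ℕ → ℝ) : Prop :=
  a ≤ T 0 ∧ a ≤ 1 - T (2 * n - 1) ∧ ∀ j : ℕ, 1 ≤ j → j ≤ 2 * n - 1 → a ≤ T j - T (j - 1)

namespace ZaBound
open MeasureTheory Set
open scoped ENNReal

/-- `H a x = 1_{[a,1]}(x) / x` as an `ℝ≥0∞`-valued function. -/
def H (a : ℝ) (x : ℝ) : ℝ≥0∞ := (Set.Icc a 1).indicator (fun x => ENNReal.ofReal x⁻¹) x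

lemma measurable_H (a : ℝ) : Measurable (H a) :=
  (Measurable.ennreal_ofReal (measurable_inv)).indicator measurableSet_Icc

lemma lintegral_H {a : ℝ} (ha : 0 < a) (ha1 : a ≤ 1) :
    ∫⁻ x, H a x = ENNReal.ofReal (-Real.log a) := by
  rw [show (fun x => H a x) = (Set.Icc a 1).indicator (fun x => ENNReal.ofReal x⁻¹) from rfl]
  rw [lintegral_indicator measurableSet_Icc]
  have hint : IntegrableOn (fun x : ℝ => x⁻¹) (Set.Icc a 1) := by
    apply ContinuousOn.integrableOn_compact isCompact_Icc
    exact continuousOn_inv₀.mono (fun x hx => by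
      simp only [mem_compl_iff, mem_singleton_iff]
      exact ne_of_gt (lt_of_lt_of_le ha hx.1))
  rw [← ofReal_integral_eq_lintegral_ofReal hint]
  · congr 1
    rw [MeasureTheory.integral_Icc_eq_integral_Ioc, ← intervalIntegral.integral_of_le ha1]
    rw [integral_inv (fun h => absurd ((Set.uIcc_of_le ha1 ▸ h).1) (not_le.mpr ha))]
    rw [Real.log_div one_ne_zero (ne_of_gt ha), Real.log_one]
    ring_nf
  · filter_upwards [self_mem_ae_restrict measurableSet_Icc] with x hx
    exact inv_nonneg.mpr (le_trans ha.le hx.1)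

lemma lintegral_H_shift {a : ℝ} (c : ℝ) : ∫⁻ x, H a (x - c) = ∫⁻ x, H a x := by
  simpa using lintegral_sub_right_eq_self (H a) c


def F (a : ℝ) : (m : ℕ) → ℝ → (Fin m → ℝ) → ℝ≥0∞
  | 0, _, _ => 1
  | (m+1), c, y => H a (y 0 - c) * F a m (y 0) (Fin.tail y)

lemma measurable_F_uncurry (a : ℝ) : ∀ m, Measurable (fun q : ℝ × (Fin m → ℝ) => F a m q.1 q.2) := by
  intro m
  induction m with
  | zero => simpa [F] using measurable_const
  | succ m ih =>
      show Measurable fun q : ℝ × (Fin (m+1) → ℝ) =>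
        H a (q.2 0 - q.1) * F a m (q.2 0) (Fin.tail q.2)
      apply Measurable.mul
      · exact (measurable_H a).comp (((measurable_pi_apply 0).comp measurable_snd).sub measurable_fst)
      · exact ih.comp (((measurable_pi_apply 0).comp measurable_snd).prodMk
          (measurable_pi_lambda _ (fun i : Fin m => (measurable_pi_apply i.succ).comp measurable_snd)))

lemma measurable_F (a : ℝ) (m : ℕ) (c : ℝ) : Measurable (F a m c) :=
  (measurable_F_uncurry a m).comp (measurable_const.prodMk measurable_id)

lemma lintegral_F (a : ℝ) (ha : 0 < a) (ha1 : a ≤ 1) :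
    ∀ m, ∀ c : ℝ, ∫⁻ y : Fin m → ℝ, F a m c y = (ENNReal.ofReal (-Real.log a)) ^ m := by
  intro m
  induction m with
  | zero =>
      intro c
      rw [show F a 0 c = fun _ => 1 from rfl, lintegral_one, volume_pi, Measure.pi_univ]
      simp
  | succ m ih =>
      intro c
      have hmp := (volume_preserving_piFinSuccAbove (fun _ : Fin (m+1) => ℝ) 0).symm
      rw [← hmp.lintegral_comp (measurable_F a (m+1) c)]
      have heq : ∀ q : ℝ × (Fin m → ℝ),
          F a (m+1) c ((MeasurableEquiv.piFinSuccAbove (fun _ : Fin (m+1) => ℝ) 0).symm q)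
            = H a (q.1 - c) * F a m q.1 q.2 := by
        rintro ⟨t, z⟩
        have : ((MeasurableEquiv.piFinSuccAbove (fun _ : Fin (m+1) => ℝ) 0).symm (t, z))
            = Fin.cons t z := by
          ext i
          simp [MeasurableEquiv.piFinSuccAbove, Fin.insertNth_zero']
        rw [this, show ∀ y, F a (m+1) c y = H a (y 0 - c) * F a m (y 0) (Fin.tail y) from fun _ => rfl,
          Fin.cons_zero, Fin.tail_cons]
      simp_rw [heq]
      rw [Measure.volume_eq_prod, MeasureTheory.lintegral_prod
        (fun q : ℝ × (Fin m → ℝ) => H a (q.1 - c) * F a m q.1 q.2)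
        ((((measurable_H a).comp ((measurable_fst).sub measurable_const)).mul
          ((measurable_F_uncurry a m))).aemeasurable)]
      simp only
      have : ∀ t : ℝ, ∫⁻ z : Fin m → ℝ, H a (t - c) * F a m t z
          = H a (t - c) * (ENNReal.ofReal (-Real.log a)) ^ m := by
        intro t
        rw [lintegral_const_mul _ (measurable_F a m t), ih t]
      simp_rw [this]
      rw [lintegral_mul_const (f := fun x => H a (x - c)) _
          ((measurable_H a).comp (measurable_id.sub measurable_const)),
        lintegral_H_shift c, lintegral_H ha ha1, pow_succ]
      ring


lemma F_eq (a : ℝ) (ha : 0 ≤ a) : ∀ (m : ℕ) (c : ℝ) (g : ℕ → ℝ),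
    (∀ i < m, a ≤ g i - (if i = 0 then c else g (i-1)) ∧ g i - (if i = 0 then c else g (i-1)) ≤ 1) →
    F a m c (fun i => g i) =
      ENNReal.ofReal (∏ i ∈ Finset.range m, (g i - (if i = 0 then c else g (i-1)))⁻¹) := by
  intro m
  induction m with
  | zero => intro c g _; simp [F]
  | succ m ih =>
      intro c g h
      have h0 := h 0 (Nat.succ_pos m)
      rw [if_pos rfl] at h0
      have hH : H a (g 0 - c) = ENNReal.ofReal ((g 0 - c)⁻¹) := by
        unfold H; rw [Set.indicator_of_mem (Set.mem_Icc.mpr ⟨h0.1, h0.2⟩)]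
      have htail : Fin.tail (fun i : Fin (m+1) => g i) = fun i : Fin m => g (i + 1) := by
        ext i; simp [Fin.tail]
      have hrec : F a (m+1) c (fun i : Fin (m+1) => g i)
          = H a (g 0 - c) * F a m (g 0) (fun i : Fin m => g (i+1)) := by
        rw [show F a (m+1) c (fun i : Fin (m+1) => g i) = H a ((fun i : Fin (m+1) => g i) 0 - c) *
          F a m ((fun i : Fin (m+1) => g i) 0) (Fin.tail (fun i : Fin (m+1) => g i)) from rfl,
          htail]
        norm_num
      have hcond : ∀ i < m, a ≤ (fun j => g (j+1)) i -
            (if i = 0 then g 0 else (fun j => g (j+1)) (i-1)) ∧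
          (fun j => g (j+1)) i - (if i = 0 then g 0 else (fun j => g (j+1)) (i-1)) ≤ 1 := by
        intro i hi
        have hh := h (i+1) (by omega)
        rcases Nat.eq_zero_or_pos i with h' | h'
        · subst h'; simpa using hh
        · have e1 : (i + 1 = 0) = False := by simp
          have e2 : (i = 0) = False := by simp [Nat.pos_iff_ne_zero.mp h']
          simp only [e1, if_false] at hh
          simp only [e2, if_false]
          have : i + 1 - 1 = i := by omega
          rw [this] at hh
          have : i - 1 + 1 = i := by omega
          rw [this]
          exact hh
      rw [hrec, hH, ih (g 0) (fun j => g (j+1)) hcond]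
      have hprodeq : (∏ i ∈ Finset.range m,
            ((fun j => g (j+1)) i - (if i = 0 then g 0 else (fun j => g (j+1)) (i-1)))⁻¹)
          = ∏ i ∈ Finset.range m, (g (i+1) - (if i + 1 = 0 then c else g (i+1-1)))⁻¹ := by
        apply Finset.prod_congr rfl
        intro i _
        rcases Nat.eq_zero_or_pos i with h' | h'
        · subst h'; norm_num
        · have e2 : (i = 0) = False := by simp [Nat.pos_iff_ne_zero.mp h']
          have e1 : (i + 1 = 0) = False := by simp
          simp only [e1, e2, if_false]
          congr 3
          omega
      rw [hprodeq, ← ENNReal.ofReal_mul (inv_nonneg.mpr (le_trans ha h0.1))]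
      congr 1
      rw [Finset.prod_range_succ']
      simp only [if_true]
      ring


def rho (N : ℕ) (y : Fin N → ℝ) : Fin N → ℝ := fun i => 1 - y (Fin.rev i)

lemma measurable_rho (N : ℕ) : Measurable (rho N) :=
  measurable_pi_lambda _ (fun i => measurable_const.sub (measurable_pi_apply _))

lemma measurePreserving_rho (N : ℕ) :
    MeasurePreserving (rho N) (volume : Measure (Fin N → ℝ)) volume := by
  have h1 : MeasurePreserving (fun (y : Fin N → ℝ) => y ∘ Fin.rev)
      (volume : Measure (Fin N → ℝ)) volume := by
    have := volume_preserving_arrowCongr' (β₁ := ℝ) (Fin.revPerm (n := N)).symm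
      (MeasurableEquiv.refl ℝ) (MeasurePreserving.id volume)
    convert this using 1 <;> rfl
  have h2 : MeasurePreserving (fun (z : Fin N → ℝ) (i : Fin N) => 1 - z i)
      (volume : Measure (Fin N → ℝ)) volume :=
    volume_preserving_pi (fun _ => Measure.measurePreserving_sub_left volume 1)
  have : rho N = (fun (z : Fin N → ℝ) (i : Fin N) => 1 - z i) ∘ (fun y => y ∘ Fin.rev) := rfl
  rw [this]
  exact h2.comp h1

def sumEquiv (n : ℕ) : (Fin n ⊕ Fin n) ≃ Fin (2 * n) :=
  finSumFinEquiv.trans (finCongr (two_mul n).symm)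

def xvec (n : ℕ) (p : (Fin n → ℝ) × (Fin n → ℝ)) : Fin (2 * n) → ℝ :=
  fun j => Sum.elim p.1 p.2 ((sumEquiv n).symm j)

lemma measurable_xvec (n : ℕ) : Measurable (xvec n) := by
  apply measurable_pi_lambda
  intro j
  rcases h : (sumEquiv n).symm j with i | i
  · simp only [xvec, h]
    exact (measurable_pi_apply i).comp measurable_fst
  · simp only [xvec, h]
    exact (measurable_pi_apply i).comp measurable_snd

lemma measurePreserving_xvec_perm (n : ℕ) (τ : Equiv.Perm (Fin (2 * n))) :
    MeasurePreserving (fun p => (xvec n p) ∘ τ)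
      (volume : Measure ((Fin n → ℝ) × (Fin n → ℝ))) volume := by
  have mp1 : MeasurePreserving
      (MeasurableEquiv.sumPiEquivProdPi (fun _ : Fin n ⊕ Fin n => ℝ)).symm
      (volume : Measure ((Fin n → ℝ) × (Fin n → ℝ))) volume :=
    volume_measurePreserving_sumPiEquivProdPi_symm _
  have mp2 : MeasurePreserving
      (MeasurableEquiv.piCongrLeft (fun _ : Fin (2*n) => ℝ) (sumEquiv n))
      (volume : Measure ((i : Fin n ⊕ Fin n) → ℝ)) volume :=
    volume_measurePreserving_piCongrLeft _ _
  have mp3 : MeasurePreserving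
      (MeasurableEquiv.arrowCongr' (τ.symm) (MeasurableEquiv.refl ℝ))
      (volume : Measure (Fin (2*n) → ℝ)) volume :=
    volume_preserving_arrowCongr' _ _ (MeasurePreserving.id volume)
  have heq : (fun p => (xvec n p) ∘ τ) =
      (MeasurableEquiv.arrowCongr' (τ.symm) (MeasurableEquiv.refl ℝ)) ∘
      (MeasurableEquiv.piCongrLeft (fun _ : Fin (2*n) => ℝ) (sumEquiv n)) ∘
      (MeasurableEquiv.sumPiEquivProdPi (fun _ : Fin n ⊕ Fin n => ℝ)).symm := by
    funext p
    funext i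
    show xvec n p (τ i) = _
    have step : ∀ (z : (i : Fin n ⊕ Fin n) → ℝ) (j : Fin (2*n)),
        (MeasurableEquiv.piCongrLeft (fun _ : Fin (2*n) => ℝ) (sumEquiv n)) z j
          = z ((sumEquiv n).symm j) := by
      intro z j
      have := MeasurableEquiv.piCongrLeft_apply_apply (sumEquiv n)
        (β := fun _ : Fin (2*n) => ℝ) z ((sumEquiv n).symm j)
      rwa [Equiv.apply_symm_apply] at this
    show xvec n p (τ i) =
      (MeasurableEquiv.piCongrLeft (fun _ : Fin (2*n) => ℝ) (sumEquiv n))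
        ((MeasurableEquiv.sumPiEquivProdPi (fun _ : Fin n ⊕ Fin n => ℝ)).symm p) (τ.symm.symm i)
    rw [Equiv.symm_symm, step]
    show Sum.elim p.1 p.2 ((sumEquiv n).symm (τ i)) = _
    rcases h : (sumEquiv n).symm (τ i) with k | k <;> rfl
  rw [heq]
  exact mp3.comp (mp2.comp mp1)


lemma pointwise_bound (n : ℕ) (hn : 1 ≤ n) {a : ℝ} (ha : 0 < a) (ha1 : a ≤ 1)
    (p : (Fin n → ℝ) × (Fin n → ℝ)) (hp : p ∈ (Delta n ×ˢ Delta n : Set _)) :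
    Set.indicator {p : (Fin n → ℝ) × (Fin n → ℝ) | memZ n a (sortedMerge n p.1 p.2)}
      (fun p => ENNReal.ofReal
        ((Real.sqrt (sortedMerge n p.1 p.2 0 * (1 - sortedMerge n p.1 p.2 (2 * n - 1))))⁻¹ *
          ∏ i ∈ Finset.Icc 1 (2 * n - 1),
            (sortedMerge n p.1 p.2 i - sortedMerge n p.1 p.2 (i - 1))⁻¹)) p
    ≤ ∑ τ : Equiv.Perm (Fin (2 * n)),
        (F a (2 * n) 0 ((xvec n p) ∘ τ) + F a (2 * n) 0 (rho (2 * n) ((xvec n p) ∘ τ))) := by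
  by_cases hmem : p ∈ {p : (Fin n → ℝ) × (Fin n → ℝ) | memZ n a (sortedMerge n p.1 p.2)}
  swap
  · rw [Set.indicator_of_notMem hmem]; exact zero_le
  rw [Set.indicator_of_mem hmem]
  set T : ℕ → ℝ := sortedMerge n p.1 p.2 with hT
  have hZ : memZ n a T := hmem
  -- values of T come from the coordinates of p
  have hval : ∀ i, i < 2 * n → ∃ k : Fin n ⊕ Fin n, Sum.elim p.1 p.2 k = T i := by
    intro i hi
    have hlen : ((Multiset.ofList (List.ofFn p.1 ++ List.ofFn p.2)).sort (· ≤ ·)).length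
        = 2 * n := by
      rw [Multiset.length_sort]
      simp [two_mul]
    have hi' : i < ((Multiset.ofList (List.ofFn p.1 ++ List.ofFn p.2)).sort (· ≤ ·)).length := by
      omega
    have : T i = ((Multiset.ofList (List.ofFn p.1 ++ List.ofFn p.2)).sort (· ≤ ·))[i] := by
      rw [hT]
      exact List.getD_eq_getElem _ _ hi'
    have hmem2 : T i ∈ (Multiset.ofList (List.ofFn p.1 ++ List.ofFn p.2)).sort (· ≤ ·) := by
      rw [this]; exact List.getElem_mem hi'
    rw [Multiset.mem_sort] at hmem2
    rw [Multiset.mem_coe, List.mem_append] at hmem2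
    rcases hmem2 with h | h
    · rw [List.mem_ofFn] at h
      obtain ⟨j, hj⟩ := h
      exact ⟨Sum.inl j, hj⟩
    · rw [List.mem_ofFn] at h
      obtain ⟨j, hj⟩ := h
      exact ⟨Sum.inr j, hj⟩
  have hrange : ∀ i, i < 2 * n → 0 ≤ T i ∧ T i ≤ 1 := by
    intro i hi
    obtain ⟨k, hk⟩ := hval i hi
    rcases k with j | j
    · have := hp.1.1 j
      simp only [Sum.elim_inl] at hk
      rw [← hk]; exact ⟨this.1, this.2⟩
    · have := hp.2.1 j
      simp only [Sum.elim_inr] at hk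
      rw [← hk]; exact ⟨this.1, this.2⟩
  -- strict monotonicity of T on {0, ..., 2n-1}
  have hmono : ∀ j, ∀ i, i < j → j ≤ 2 * n - 1 → T i < T j := by
    intro j
    induction j with
    | zero => intro i hi _; omega
    | succ k ih =>
        intro i hi hk
        have hgap := hZ.2.2 (k+1) (by omega) hk
        have hk1 : T k < T (k+1) := by
          have : k + 1 - 1 = k := by omega
          rw [this] at hgap; linarith
        rcases Nat.lt_succ_iff_lt_or_eq.mp hi with h | h
        · exact lt_trans (ih i h (by omega)) hk1
        · subst h; exact hk1
  -- construct the permutation σ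
  have hval' : ∀ i : Fin (2 * n), ∃ j : Fin (2 * n), xvec n p j = T (i : ℕ) := by
    intro i
    obtain ⟨k, hk⟩ := hval i i.isLt
    exact ⟨sumEquiv n k, by simp [xvec, Equiv.symm_apply_apply, hk]⟩
  choose f hf using hval'
  have hinj : Function.Injective f := by
    intro i i' h
    have hTi : T (i : ℕ) = T (i' : ℕ) := by rw [← hf i, ← hf i', h]
    by_contra hne
    have hne' : (i : ℕ) ≠ (i' : ℕ) := fun hc => hne (Fin.ext hc)
    rcases lt_or_gt_of_ne hne' with h' | h'
    · exact absurd hTi (ne_of_lt (hmono _ _ h' (by have := i'.isLt; omega)))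
    · exact absurd hTi.symm (ne_of_lt (hmono _ _ h' (by have := i.isLt; omega)))
  let σ : Equiv.Perm (Fin (2 * n)) := Equiv.ofBijective f (Finite.injective_iff_bijective.mp hinj)
  have hσ : ∀ i : Fin (2 * n), xvec n p (σ i) = T (i : ℕ) := fun i => hf i
  have hN1 : 1 ≤ 2 * n := by omega
  -- gap bounds
  have hgap : ∀ i, 1 ≤ i → i ≤ 2 * n - 1 → a ≤ T i - T (i-1) ∧ T i - T (i-1) ≤ 1 := by
    intro i h1 h2
    refine ⟨hZ.2.2 i h1 h2, ?_⟩
    have hi := (hrange i (by omega)).2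
    have hi1 := (hrange (i-1) (by omega)).1
    linarith
  have hT0 : a ≤ T 0 ∧ T 0 ≤ 1 := ⟨hZ.1, (hrange 0 (by omega)).2⟩
  have hTl : a ≤ 1 - T (2*n-1) ∧ 1 - T (2*n-1) ≤ 1 := by
    refine ⟨hZ.2.1, ?_⟩
    have := (hrange (2*n-1) (by omega)).1
    linarith
  -- the range-product splits as first factor times Icc product
  have hsplit : ∀ g : ℕ → ℝ,
      ∏ i ∈ Finset.range (2*n), (g i - (if i = 0 then (0:ℝ) else g (i-1)))⁻¹
        = (g 0)⁻¹ * ∏ i ∈ Finset.Icc 1 (2*n-1), (g i - g (i-1))⁻¹ := by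
    intro g
    have hr : Finset.range (2*n) = insert 0 (Finset.Icc 1 (2*n-1)) := by
      ext x
      simp only [Finset.mem_range, Finset.mem_insert, Finset.mem_Icc]
      omega
    rw [hr, Finset.prod_insert (by simp)]
    congr 1
    · simp
    · apply Finset.prod_congr rfl
      intro i hi
      rw [Finset.mem_Icc] at hi
      rw [if_neg (by omega)]
  have hcond1 : ∀ i < 2*n, a ≤ T i - (if i = 0 then (0:ℝ) else T (i-1)) ∧
      T i - (if i = 0 then (0:ℝ) else T (i-1)) ≤ 1 := by
    intro i hi
    rcases Nat.eq_zero_or_pos i with h0 | h0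
    · subst h0
      simpa using hT0
    · rw [if_neg (by omega)]
      exact hgap i (by omega) (by omega)
  have key1 : ENNReal.ofReal ((T 0)⁻¹ * ∏ i ∈ Finset.Icc 1 (2*n-1), (T i - T (i-1))⁻¹)
      = F a (2*n) 0 ((xvec n p) ∘ σ) := by
    have hfun : (xvec n p) ∘ σ = fun i : Fin (2*n) => T (i : ℕ) := funext fun i => hσ i
    rw [hfun, F_eq a ha.le (2*n) 0 T hcond1, hsplit T]
  have key2 : ENNReal.ofReal ((1 - T (2*n-1))⁻¹ * ∏ i ∈ Finset.Icc 1 (2*n-1), (T i - T (i-1))⁻¹)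
      = F a (2*n) 0 (rho (2*n) ((xvec n p) ∘ σ)) := by
    set g : ℕ → ℝ := fun j => 1 - T (2*n-1-j) with hg
    have hfun : rho (2*n) ((xvec n p) ∘ σ) = fun i : Fin (2*n) => g (i : ℕ) := by
      funext i
      show 1 - ((xvec n p) ∘ σ) (Fin.rev i) = g (i : ℕ)
      rw [Function.comp_apply, hσ (Fin.rev i), hg]
      congr 2
      rw [Fin.val_rev]
      omega
    have hgdiff : ∀ i, 1 ≤ i → i < 2*n → g i - g (i-1) = T (2*n-i) - T (2*n-i-1) := by
      intro i h1 h2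
      rw [hg]
      have e2 : 2*n - 1 - i = 2*n - i - 1 := by omega
      have e3 : 2*n - 1 - (i-1) = 2*n - i := by omega
      simp only [e2, e3]
      ring
    have hcond2 : ∀ i < 2*n, a ≤ g i - (if i = 0 then (0:ℝ) else g (i-1)) ∧
        g i - (if i = 0 then (0:ℝ) else g (i-1)) ≤ 1 := by
      intro i hi
      rcases Nat.eq_zero_or_pos i with h0 | h0
      · subst h0
        simp only [hg]
        simpa using hTl
      · rw [if_neg (by omega), hgdiff i (by omega) hi]
        have := hgap (2*n-i) (by omega) (by omega)
        have e4 : 2*n - i - 1 = (2*n - i) - 1 := rfl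
        rw [e4]
        exact this
    have hbij : ∏ i ∈ Finset.Icc 1 (2*n-1), (g i - g (i-1))⁻¹
        = ∏ i ∈ Finset.Icc 1 (2*n-1), (T i - T (i-1))⁻¹ := by
      have hre : ∀ i ∈ Finset.Icc 1 (2*n-1), (g i - g (i-1))⁻¹
          = (T (2*n-i) - T ((2*n-i)-1))⁻¹ := by
        intro i hi
        rw [Finset.mem_Icc] at hi
        rw [hgdiff i hi.1 (by omega)]
      rw [Finset.prod_congr rfl hre]
      apply Finset.prod_nbij' (fun i => 2*n - i) (fun j => 2*n - j)
      · intro i hi; rw [Finset.mem_Icc] at hi ⊢; omega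
      · intro j hj; rw [Finset.mem_Icc] at hj ⊢; omega
      · intro i hi; rw [Finset.mem_Icc] at hi; omega
      · intro j hj; rw [Finset.mem_Icc] at hj; omega
      · intro i hi; rfl
    have hg0 : (g 0)⁻¹ = (1 - T (2*n-1))⁻¹ := by rw [hg]; norm_num
    rw [hfun, F_eq a ha.le (2*n) 0 g hcond2, hsplit g, hbij, hg0]
  -- sqrt estimate
  set u := T 0 with hu
  set v := 1 - T (2*n-1) with hv
  have hu0 : 0 < u := lt_of_lt_of_le ha hT0.1
  have hv0 : 0 < v := lt_of_lt_of_le ha hTl.1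
  have hsq : (Real.sqrt (u * v))⁻¹ ≤ u⁻¹ + v⁻¹ := by
    have hmin : min u v ≤ Real.sqrt (u * v) := by
      have h1 : (min u v)^2 ≤ u * v := by
        rcases min_cases u v with ⟨h, h'⟩ | ⟨h, h'⟩ <;> rw [h] <;> nlinarith
      calc min u v = Real.sqrt ((min u v)^2) := (Real.sqrt_sq (le_min hu0.le hv0.le)).symm
        _ ≤ Real.sqrt (u * v) := Real.sqrt_le_sqrt h1
    have hminpos : 0 < min u v := lt_min hu0 hv0
    have h2 : (Real.sqrt (u * v))⁻¹ ≤ (min u v)⁻¹ :=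
      inv_anti₀ hminpos hmin
    refine le_trans h2 ?_
    rcases min_cases u v with ⟨h, _⟩ | ⟨h, _⟩ <;> rw [h]
    · nlinarith [inv_nonneg.mpr hv0.le]
    · nlinarith [inv_nonneg.mpr hu0.le]
  have hP : 0 ≤ ∏ i ∈ Finset.Icc 1 (2*n-1), (T i - T (i-1))⁻¹ := by
    apply Finset.prod_nonneg
    intro i hi
    rw [Finset.mem_Icc] at hi
    exact inv_nonneg.mpr (by linarith [(hgap i hi.1 hi.2).1])
  calc ENNReal.ofReal ((Real.sqrt (u * v))⁻¹ * ∏ i ∈ Finset.Icc 1 (2*n-1), (T i - T (i-1))⁻¹)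
      ≤ ENNReal.ofReal ((u⁻¹ + v⁻¹) * ∏ i ∈ Finset.Icc 1 (2*n-1), (T i - T (i-1))⁻¹) :=
        ENNReal.ofReal_le_ofReal (mul_le_mul_of_nonneg_right hsq hP)
    _ = ENNReal.ofReal (u⁻¹ * ∏ i ∈ Finset.Icc 1 (2*n-1), (T i - T (i-1))⁻¹)
        + ENNReal.ofReal (v⁻¹ * ∏ i ∈ Finset.Icc 1 (2*n-1), (T i - T (i-1))⁻¹) := by
        rw [← ENNReal.ofReal_add (mul_nonneg (inv_nonneg.mpr hu0.le) hP)
          (mul_nonneg (inv_nonneg.mpr hv0.le) hP)]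
        ring_nf
    _ = F a (2*n) 0 ((xvec n p) ∘ σ) + F a (2*n) 0 (rho (2*n) ((xvec n p) ∘ σ)) := by
        rw [key1, key2]
    _ ≤ ∑ τ : Equiv.Perm (Fin (2 * n)),
        (F a (2 * n) 0 ((xvec n p) ∘ τ) + F a (2 * n) 0 (rho (2 * n) ((xvec n p) ∘ τ))) :=
        Finset.single_le_sum (f := fun τ : Equiv.Perm (Fin (2*n)) =>
          F a (2*n) 0 ((xvec n p) ∘ τ) + F a (2*n) 0 (rho (2*n) ((xvec n p) ∘ τ)))
          (fun _ _ => zero_le) (Finset.mem_univ σ)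


end ZaBound

open ZaBound MeasureTheory Set
open scoped ENNReal

/-- The singular integrand over `Δ_n × Δ_n`, restricted to `Z_a`, integrates to at most
`C |log a|^C`. -/
theorem integral_on_Za_bound (n : ℕ) (hn : 2 ≤ n) :
    ∃ C : ℝ, 0 < C ∧
      ∀ a : ℝ, 0 < a → a < Real.exp (-1) →
        (∫⁻ p in (Delta n ×ˢ Delta n : Set ((Fin n → ℝ) × (Fin n → ℝ))),
          Set.indicator {p : (Fin n → ℝ) × (Fin n → ℝ) | memZ n a (sortedMerge n p.1 p.2)}
            (fun p => ENNReal.ofReal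
              ((Real.sqrt (sortedMerge n p.1 p.2 0 * (1 - sortedMerge n p.1 p.2 (2 * n - 1))))⁻¹ *
                ∏ i ∈ Finset.Icc 1 (2 * n - 1),
                  (sortedMerge n p.1 p.2 i - sortedMerge n p.1 p.2 (i - 1))⁻¹)) p) ≤
          ENNReal.ofReal (C * |Real.log a| ^ C) := by
  refine ⟨2 * (Nat.factorial (2 * n) : ℝ) + 2 * n, by positivity, ?_⟩
  intro a ha haexp
  have ha1 : a ≤ 1 := by
    have h1 : Real.exp (-1) < 1 := by
      rw [show (1:ℝ) = Real.exp 0 by simp]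
      exact Real.exp_lt_exp.mpr (by norm_num)
    linarith
  have hlog : Real.log a < -1 := by
    have := Real.log_lt_log ha haexp
    rwa [Real.log_exp] at this
  have hlogpos : 0 < -Real.log a := by linarith
  set L : ℝ≥0∞ := ENNReal.ofReal (-Real.log a) with hL
  have hψmeas : ∀ τ : Equiv.Perm (Fin (2 * n)),
      Measurable (fun p : (Fin n → ℝ) × (Fin n → ℝ) => (xvec n p) ∘ τ) := fun τ =>
    (measurePreserving_xvec_perm n τ).measurable
  have htermmeas : ∀ τ : Equiv.Perm (Fin (2 * n)),
      Measurable (fun p : (Fin n → ℝ) × (Fin n → ℝ) =>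
        F a (2 * n) 0 ((xvec n p) ∘ τ) + F a (2 * n) 0 (rho (2 * n) ((xvec n p) ∘ τ))) :=
    fun τ => ((measurable_F a (2*n) 0).comp (hψmeas τ)).add
      ((measurable_F a (2*n) 0).comp ((measurable_rho (2*n)).comp (hψmeas τ)))
  have hbound_meas : Measurable (fun p : (Fin n → ℝ) × (Fin n → ℝ) =>
      ∑ τ : Equiv.Perm (Fin (2 * n)),
        (F a (2 * n) 0 ((xvec n p) ∘ τ) + F a (2 * n) 0 (rho (2 * n) ((xvec n p) ∘ τ)))) :=
    Finset.measurable_sum _ (fun τ _ => htermmeas τ)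
  calc (∫⁻ p in (Delta n ×ˢ Delta n : Set ((Fin n → ℝ) × (Fin n → ℝ))),
          Set.indicator {p : (Fin n → ℝ) × (Fin n → ℝ) | memZ n a (sortedMerge n p.1 p.2)}
            (fun p => ENNReal.ofReal
              ((Real.sqrt (sortedMerge n p.1 p.2 0 * (1 - sortedMerge n p.1 p.2 (2 * n - 1))))⁻¹ *
                ∏ i ∈ Finset.Icc 1 (2 * n - 1),
                  (sortedMerge n p.1 p.2 i - sortedMerge n p.1 p.2 (i - 1))⁻¹)) p)
      ≤ ∫⁻ p in (Delta n ×ˢ Delta n : Set ((Fin n → ℝ) × (Fin n → ℝ))),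
          ∑ τ : Equiv.Perm (Fin (2 * n)),
            (F a (2 * n) 0 ((xvec n p) ∘ τ) + F a (2 * n) 0 (rho (2 * n) ((xvec n p) ∘ τ))) :=
        setLIntegral_mono hbound_meas
          (fun p hp => pointwise_bound n (by omega) ha ha1 p hp)
    _ ≤ ∫⁻ p, ∑ τ : Equiv.Perm (Fin (2 * n)),
            (F a (2 * n) 0 ((xvec n p) ∘ τ) + F a (2 * n) 0 (rho (2 * n) ((xvec n p) ∘ τ))) :=
        setLIntegral_le_lintegral _ _
    _ = ∑ τ : Equiv.Perm (Fin (2 * n)), ∫⁻ p,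
            (F a (2 * n) 0 ((xvec n p) ∘ τ) + F a (2 * n) 0 (rho (2 * n) ((xvec n p) ∘ τ))) :=
        lintegral_finset_sum _ (fun τ _ => htermmeas τ)
    _ = ∑ _τ : Equiv.Perm (Fin (2 * n)), (L ^ (2*n) + L ^ (2*n)) := by
        apply Finset.sum_congr rfl
        intro τ _
        rw [lintegral_add_left (f := fun p : (Fin n → ℝ) × (Fin n → ℝ) => F a (2*n) 0 ((xvec n p) ∘ τ)) ((measurable_F a (2*n) 0).comp (hψmeas τ))]
        congr 1
        · rw [(measurePreserving_xvec_perm n τ).lintegral_comp (measurable_F a (2*n) 0)]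
          exact lintegral_F a ha ha1 (2*n) 0
        · have mp2 : MeasurePreserving
              (fun p : (Fin n → ℝ) × (Fin n → ℝ) => rho (2*n) ((xvec n p) ∘ τ))
              volume volume :=
            (measurePreserving_rho (2*n)).comp (measurePreserving_xvec_perm n τ)
          rw [mp2.lintegral_comp (measurable_F a (2*n) 0)]
          exact lintegral_F a ha ha1 (2*n) 0
    _ = (Nat.factorial (2*n) : ℝ≥0∞) * (L ^ (2*n) + L ^ (2*n)) := by
        rw [Finset.sum_const, nsmul_eq_mul]
        congr 1
        rw [Finset.card_univ, Fintype.card_perm, Fintype.card_fin]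
    _ ≤ ENNReal.ofReal ((2 * (Nat.factorial (2 * n) : ℝ) + 2 * n) *
          |Real.log a| ^ (2 * (Nat.factorial (2 * n) : ℝ) + 2 * n)) := by
        have hB : |Real.log a| = -Real.log a := abs_of_neg (by linarith)
        have hLpow : L ^ (2*n) = ENNReal.ofReal ((-Real.log a) ^ (2*n)) := by
          rw [hL, ENNReal.ofReal_pow hlogpos.le]
        rw [hLpow, ← ENNReal.ofReal_add (by positivity) (by positivity),
          ← ENNReal.ofReal_natCast, ← ENNReal.ofReal_mul (by positivity)]
        apply ENNReal.ofReal_le_ofReal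
        rw [hB]
        set B : ℝ := -Real.log a with hBdef
        have hB1 : 1 ≤ B := by rw [hBdef]; linarith
        set C : ℝ := 2 * (Nat.factorial (2 * n) : ℝ) + 2 * n with hC
        have hpow : B ^ (2*n) ≤ B ^ C := by
          rw [← Real.rpow_natCast B (2*n)]
          apply Real.rpow_le_rpow_of_exponent_le hB1
          rw [hC]
          have : (0:ℝ) ≤ (Nat.factorial (2 * n) : ℝ) := by positivity
          push_cast
          linarith
        have hcoef : (Nat.factorial (2 * n) : ℝ) * 2 ≤ C := by
          rw [hC]; push_cast; linarith [Nat.cast_nonneg (α := ℝ) n]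
        calc (Nat.factorial (2 * n) : ℝ) * (B ^ (2*n) + B ^ (2*n))
            = ((Nat.factorial (2 * n) : ℝ) * 2) * B ^ (2*n) := by ring
          _ ≤ C * B ^ C := by
              apply mul_le_mul hcoef hpow (by positivity) (by rw [hC]; positivity)

end
end

section
/- For every n ≥ 2 there exists C > 0 such that for every a with 0 < a < e^{−1}: ∫_{Δ_n × Δ_n} 1{t(r,s) ∉ Z_a} dr ds ≤ C·a. -/
noncomputable section

/-!
Put `x := Sum.elim r s`, the `2n` points of `r` and `s` as one family. If the points `x i`,
together with `0` and `1`, are pairwise at distance at least `a`, then so are the consecutive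
entries of their sorted merge, which is then in `Z_a`. Inside the unit cube of `ℝ^{2n}`, each of
the events `x i < a`, `x i > 1 - a` and `|x i - x j| < a` (for `i ≠ j`) is a slab of width at most
`2a` in a suitable (sheared) coordinate and so has volume at most `2a`; there are `O(n²)` of them.
-/

open MeasureTheory Set

theorem List.getD_mem {α : Type*} {l : List α} {i : ℕ} (d : α) (hi : i < l.length) :
    l.getD i d ∈ l := by
  rw [List.getD_eq_getElem l d hi]
  exact List.getElem_mem hi

theorem List.le_getD_sub_getD {S : List ℝ} {a : ℝ} (hsort : S.Pairwise (· ≤ ·))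
    (hsep : S.Pairwise fun u v => a ≤ |u - v|) {i j : ℕ} (hij : i < j) (hj : j < S.length) :
    a ≤ S.getD j 0 - S.getD i 0 := by
  rw [List.getD_eq_getElem S 0 hj, List.getD_eq_getElem S 0 (hij.trans hj)]
  have hle := List.pairwise_iff_getElem.1 hsort i j (hij.trans hj) hj hij
  have hsep' := List.pairwise_iff_getElem.1 hsep i j (hij.trans hj) hj hij
  rwa [abs_sub_comm, abs_of_nonneg (sub_nonneg.2 hle)] at hsep'

section UnitCube

variable {ι : Type*}

def WellSpaced (a : ℝ) (x : ι → ℝ) : Prop :=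
  (∀ i, a ≤ x i ∧ x i ≤ 1 - a) ∧ Pairwise fun i j => a ≤ |x i - x j|

theorem Icc_inter_not_wellSpaced_subset (a : ℝ) :
    Icc (0 : ι → ℝ) 1 ∩ {x | ¬ WellSpaced a x} ⊆
      (⋃ i, Icc 0 1 ∩ (fun x => x i) ⁻¹' Metric.ball 0 a) ∪
      (⋃ i, Icc 0 1 ∩ (fun x => x i) ⁻¹' Metric.ball 1 a) ∪
      ⋃ p : {p : ι × ι // p.1 ≠ p.2},
        Icc 0 1 ∩ (fun x => x p.1.1 - x p.1.2) ⁻¹' Metric.ball 0 a := by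
  rintro x ⟨hx, hbad⟩
  simp only [WellSpaced, Pairwise, not_and_or, not_forall, not_le, mem_ofPred_eq] at hbad
  simp only [mem_union, mem_iUnion, mem_inter_iff, mem_preimage, Metric.mem_ball, Real.dist_eq]
  rcases hbad with ⟨i, hi | hi⟩ | ⟨i, j, hij, hlt⟩
  · exact Or.inl (Or.inl ⟨i, hx, by rwa [sub_zero, abs_of_nonneg (hx.1 i)]⟩)
  · have hi1 : x i ≤ 1 := hx.2 i
    exact Or.inl (Or.inr ⟨i, hx, abs_lt.2 ⟨by linarith, by linarith⟩⟩)
  · exact Or.inr ⟨⟨(i, j), hij⟩, hx, by rwa [sub_zero]⟩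

theorem Icc_inter_eval_preimage_subset [DecidableEq ι] (i : ι) (I : Set ℝ) :
    Icc (0 : ι → ℝ) 1 ∩ (fun x => x i) ⁻¹' I ⊆
      univ.pi (Function.update (fun _ => Icc (0 : ℝ) 1) i I) := by
  rintro x ⟨hx, hxi⟩ k -
  rcases eq_or_ne k i with rfl | hk
  · simpa using hxi
  · simpa [hk] using ⟨hx.1 k, hx.2 k⟩

variable [Fintype ι]

theorem volume_pi_update_Icc [DecidableEq ι] (i : ι) (I : Set ℝ) :
    volume (univ.pi (Function.update (fun _ => Icc (0 : ℝ) 1) i I)) = volume I := by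
  rw [volume_pi_pi]
  simp_rw [Function.apply_update (fun _ => (volume : Measure ℝ)),
    Finset.prod_update_of_mem (Finset.mem_univ i), Real.volume_Icc]
  simp

theorem toLin'_transvection_apply [DecidableEq ι] (i j : ι) (c : ℝ) (x : ι → ℝ) :
    Matrix.toLin' (Matrix.transvection i j c) x = Function.update x i (x i + c * x j) := by
  ext k
  rcases eq_or_ne k i with rfl | hk
  · simp [Matrix.transvection, Matrix.single_mulVec]
  · simp [Matrix.transvection, Matrix.single_mulVec, hk]

theorem volume_Icc_inter_eval_preimage_le (i : ι) (I : Set ℝ) :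
    volume (Icc (0 : ι → ℝ) 1 ∩ (fun x => x i) ⁻¹' I) ≤ volume I := by
  classical
  exact (measure_mono (Icc_inter_eval_preimage_subset i I)).trans_eq (volume_pi_update_Icc i I)

/-- The shear `x ↦ x - x j • eᵢ` has determinant one and maps the cube into a slab of height one
in the `i`-th direction. -/
theorem volume_Icc_inter_sub_preimage_le {i j : ι} (hij : i ≠ j) (I : Set ℝ) :
    volume (Icc (0 : ι → ℝ) 1 ∩ (fun x => x i - x j) ⁻¹' I) ≤ volume I := by
  classical
  set T := Matrix.toLin' (Matrix.transvection i j (-1 : ℝ))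
  have hdet : LinearMap.det T = 1 := by
    rw [LinearMap.det_toLin', Matrix.det_transvection_of_ne i j hij]
  have hsub : Icc (0 : ι → ℝ) 1 ∩ (fun x => x i - x j) ⁻¹' I ⊆
      T ⁻¹' univ.pi (Function.update (fun _ => Icc (0 : ℝ) 1) i I) := by
    rintro x ⟨hx, hxI⟩ k -
    rw [toLin'_transvection_apply]
    rcases eq_or_ne k i with rfl | hk
    · simpa [sub_eq_add_neg] using hxI
    · simpa [hk] using ⟨hx.1 k, hx.2 k⟩
  calc volume _ ≤ volume (T ⁻¹' univ.pi (Function.update (fun _ => Icc (0 : ℝ) 1) i I)) :=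
        measure_mono hsub
    _ = volume I := by
        rw [Measure.addHaar_preimage_linearMap _ (by simp [hdet]), hdet, volume_pi_update_Icc]
        simp

theorem volume_Icc_inter_not_wellSpaced_le (a : ℝ) :
    volume (Icc (0 : ι → ℝ) 1 ∩ {x | ¬ WellSpaced a x}) ≤
      ENNReal.ofReal ((2 * Fintype.card ι + Fintype.card ι ^ 2) * (2 * a)) := by
  classical
  calc volume (Icc (0 : ι → ℝ) 1 ∩ {x | ¬ WellSpaced a x})
      ≤ (∑ _i : ι, ENNReal.ofReal (2 * a)) + (∑ _i : ι, ENNReal.ofReal (2 * a)) +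
          ∑ _p : {p : ι × ι // p.1 ≠ p.2}, ENNReal.ofReal (2 * a) := by
        refine (measure_mono (Icc_inter_not_wellSpaced_subset a)).trans <|
          (measure_union_le _ _).trans <| add_le_add ((measure_union_le _ _).trans <|
            add_le_add ?_ ?_) ?_ <;>
        refine (measure_iUnion_fintype_le _ _).trans <| Finset.sum_le_sum fun p _ => ?_
        · exact (volume_Icc_inter_eval_preimage_le _ _).trans_eq (Real.volume_ball _ _)
        · exact (volume_Icc_inter_eval_preimage_le _ _).trans_eq (Real.volume_ball _ _)
        · exact (volume_Icc_inter_sub_preimage_le p.2 _).trans_eq (Real.volume_ball _ _)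
    _ ≤ (2 * Fintype.card ι + Fintype.card ι ^ 2) * ENNReal.ofReal (2 * a) := by
        have hcard : Fintype.card {p : ι × ι // p.1 ≠ p.2} ≤ Fintype.card ι ^ 2 :=
          (Fintype.card_subtype_le _).trans_eq (by rw [Fintype.card_prod, sq])
        simp only [Finset.sum_const, Finset.card_univ, nsmul_eq_mul]
        rw [← add_mul, ← add_mul, ← two_mul]
        gcongr
        exact_mod_cast hcard
    _ = ENNReal.ofReal ((2 * Fintype.card ι + Fintype.card ι ^ 2) * (2 * a)) := by
        have hk := ENNReal.ofReal_natCast (2 * Fintype.card ι + Fintype.card ι ^ 2)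
        push_cast at hk
        rw [← hk, ← ENNReal.ofReal_mul (by positivity)]

end UnitCube

theorem measurableSet_Delta (n : ℕ) : MeasurableSet (Delta n) := by
  simp only [Delta, StrictMono, ofPred_and, ofPred_forall]
  measurability

theorem sumElim_mem_Icc_of_mem_Delta {n : ℕ} {r s : Fin n → ℝ} (hr : r ∈ Delta n)
    (hs : s ∈ Delta n) : Sum.elim r s ∈ Icc 0 1 := by
  constructor <;> rintro (i | i)
  exacts [(hr.1 i).1, (hs.1 i).1, (hr.1 i).2, (hs.1 i).2]

theorem memZ_sortedMerge_of_wellSpaced {n : ℕ} (hn : n ≠ 0) {a : ℝ} {r s : Fin n → ℝ}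
    (h : WellSpaced a (Sum.elim r s)) : memZ n a (sortedMerge n r s) := by
  set l := List.ofFn r ++ List.ofFn s
  set S := (l : Multiset ℝ).sort (· ≤ ·)
  have hlen : S.length = 2 * n := by simp [S, l, two_mul]
  have hperm : S.Perm l := Multiset.coe_eq_coe.1 (Multiset.sort_eq _ _)
  have hbounds : ∀ v ∈ S, a ≤ v ∧ v ≤ 1 - a := by
    intro v hv
    rcases List.mem_append.1 (hperm.mem_iff.1 hv) with hv | hv <;>
      obtain ⟨i, rfl⟩ := List.mem_ofFn.1 hv
    exacts [h.1 (Sum.inl i), h.1 (Sum.inr i)]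
  have hsep : S.Pairwise fun u v => a ≤ |u - v| := by
    refine (hperm.pairwise_iff fun huv => by rwa [abs_sub_comm]).2 ?_
    refine List.pairwise_append.2 ⟨List.pairwise_ofFn.2 fun i j hij => ?_,
      List.pairwise_ofFn.2 fun i j hij => ?_, fun u hu v hv => ?_⟩
    · exact h.2 (Sum.inl_injective.ne hij.ne)
    · exact h.2 (Sum.inr_injective.ne hij.ne)
    · obtain ⟨i, rfl⟩ := List.mem_ofFn.1 hu
      obtain ⟨j, rfl⟩ := List.mem_ofFn.1 hv
      exact h.2 Sum.inl_ne_inr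
  refine ⟨(hbounds _ (List.getD_mem (l := S) 0 (by omega))).1,
    le_sub_comm.1 (hbounds _ (List.getD_mem (l := S) (i := 2 * n - 1) 0 (by omega))).2,
    fun j hj1 hj2 => ?_⟩
  exact List.le_getD_sub_getD (S := S) (Multiset.pairwise_sort _ _) hsep (by omega) (by omega)

/-- The measure of the part of `Δ_n × Δ_n` whose sorted merge lies outside `Z_a` is at most
`C·a`. -/
theorem measure_not_Za_bound (n : ℕ) (hn : 2 ≤ n) :
    ∃ C : ℝ, 0 < C ∧
      ∀ a : ℝ, 0 < a → a < Real.exp (-1) →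
        (∫⁻ p in (Delta n ×ˢ Delta n : Set ((Fin n → ℝ) × (Fin n → ℝ))),
          Set.indicator {p : (Fin n → ℝ) × (Fin n → ℝ) | ¬ memZ n a (sortedMerge n p.1 p.2)}
            (fun _ => (1 : ENNReal)) p) ≤
          ENNReal.ofReal (C * a) := by
  refine ⟨8 * n * (n + 1), by positivity, fun a _ _ => ?_⟩
  set e := MeasurableEquiv.sumPiEquivProdPi fun _ : Fin n ⊕ Fin n => ℝ
  have hcover : {p | ¬ memZ n a (sortedMerge n p.1 p.2)} ∩ Delta n ×ˢ Delta n ⊆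
      e.symm ⁻¹' (Icc 0 1 ∩ {x | ¬ WellSpaced a x}) := fun p ⟨hbad, hr, hs⟩ =>
    ⟨sumElim_mem_Icc_of_mem_Delta hr hs,
      fun hx => hbad (memZ_sortedMerge_of_wellSpaced (by omega) hx)⟩
  calc _ ≤ (volume.restrict (Delta n ×ˢ Delta n)) {p | ¬ memZ n a (sortedMerge n p.1 p.2)} :=
        lintegral_indicator_one_le _
    _ ≤ volume (Icc (0 : Fin n ⊕ Fin n → ℝ) 1 ∩ {x | ¬ WellSpaced a x}) := by
        rw [Measure.restrict_apply' ((measurableSet_Delta n).prod (measurableSet_Delta n)),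
          ← (volume_measurePreserving_sumPiEquivProdPi _).symm.measure_preimage_equiv]
        exact measure_mono hcover
    _ ≤ ENNReal.ofReal (8 * n * (n + 1) * a) := by
        refine (volume_Icc_inter_not_wellSpaced_le a).trans_eq ?_
        simp only [Fintype.card_sum, Fintype.card_fin]
        congr 1
        push_cast
        ring

end
end
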